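/- arXiv:1906.10951 — 6 statements merged into one kernel-verified Lean document; each statement's English description precedes it below -/
import Mathlib

section
/- For the Rescaled Pólya urn with β > 1, the predictive mean ψ_N converges almost surely, as N → ∞, to the random vector ψ_∞ = (B₀ + α Σ_{n=1}^∞ β^{-n} ξ_n) / (|B₀| + α/(β−1)), and the rate of convergence is |ψ_N − ψ_∞| = O(β^{-N}) almost surely. Moreover ψ_∞ takes values in the simplex {x ∈ [0,1]^k : |x| = 1}, and if B₀ᵢ > 0 for all i = 1,…,k, then almost surely ψ_{∞,i} ∈ (0,1) for each i. -/
/-!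
The argument is pathwise. Unrolling the recursion gives
`β⁻ᴺ (b₀ + B_N) = β⁻ᴺ b₀ + B₀ + α ∑_{n ≤ N} β⁻ⁿ ξ_n`, and since every draw lies in the simplex,
this vector differs in `ℓ¹` from its limit `B₀ + α ∑_n β⁻ⁿ ξ_n` by at most
`β⁻ᴺ (|b₀| + α / (β - 1))`, while the limit has mass exactly `|B₀| + α / (β - 1)`.
Now `ψ_N` and `ψ_∞` are the `ℓ¹`-normalizations of these two nonnegative vectors, and
`u ↦ u / |u|` moves distances by a factor at most `2 / |v|` near `v`; this gives the
`O(β⁻ᴺ)` rate. The simplex statements are properties of normalized nonnegative vectors.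
-/

open MeasureTheory Filter Finset

section Normalization

variable {ι : Type*} [Fintype ι]

lemma div_sum_mem_Icc {u : ι → ℝ} (hu : ∀ i, 0 ≤ u i) (i : ι) :
    u i / ∑ j, u j ∈ Set.Icc 0 1 :=
  ⟨div_nonneg (hu i) (sum_nonneg fun j _ => hu j),
    div_le_one_of_le₀ (single_le_sum (fun j _ => hu j) (mem_univ i))
      (sum_nonneg fun j _ => hu j)⟩

lemma sum_div_sum_self {u : ι → ℝ} (hu : ∑ j, u j ≠ 0) : ∑ i, u i / ∑ j, u j = 1 := by
  rw [← sum_div, div_self hu]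

lemma div_sum_mem_Ioo [Nontrivial ι] {u : ι → ℝ} (hu : ∀ i, 0 < u i) (i : ι) :
    u i / ∑ j, u j ∈ Set.Ioo 0 1 := by
  obtain ⟨j, hj⟩ := exists_ne i
  have hsum : 0 < ∑ j, u j := sum_pos (fun j _ => hu j) univ_nonempty
  refine ⟨div_pos (hu i) hsum, (div_lt_one hsum).2 ?_⟩
  exact single_lt_sum hj (mem_univ i) (mem_univ j) (hu j) fun t _ _ => (hu t).le

lemma mul_div_sum_mul {c : ℝ} (hc : c ≠ 0) (u : ι → ℝ) (i : ι) :
    c * u i / ∑ j, c * u j = u i / ∑ j, u j := by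
  rw [← mul_sum, mul_div_mul_left _ _ hc]

lemma sum_abs_div_sum_sub_div_sum_le {u v : ι → ℝ} (hu : ∀ i, 0 ≤ u i)
    (hv : 0 < ∑ j, v j) :
    ∑ i, |u i / ∑ j, u j - v i / ∑ j, v j| ≤ 2 * (∑ i, |u i - v i|) / ∑ j, v j := by
  set U := ∑ j, u j
  set V := ∑ j, v j
  have hsplit : ∀ i, |u i / U - v i / V| ≤ |u i - v i| / V + u i * |U⁻¹ - V⁻¹| := by
    intro i
    calc |u i / U - v i / V| = |(u i - v i) / V + u i * (U⁻¹ - V⁻¹)| := by ring_nf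
      _ ≤ |(u i - v i) / V| + |u i * (U⁻¹ - V⁻¹)| := abs_add_le _ _
      _ = |u i - v i| / V + u i * |U⁻¹ - V⁻¹| := by
        rw [abs_div, abs_of_pos hv, abs_mul, abs_of_nonneg (hu i)]
  have hscale : U * |U⁻¹ - V⁻¹| ≤ |V - U| / V := by
    rcases eq_or_ne U 0 with hU | hU
    · rw [hU, zero_mul]; positivity
    · refine le_of_eq ?_
      calc U * |U⁻¹ - V⁻¹| = |U * (U⁻¹ - V⁻¹)| := by
            rw [abs_mul, abs_of_nonneg (sum_nonneg fun j _ => hu j : 0 ≤ U)]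
        _ = |(V - U) / V| := by congr 1; field_simp
        _ = |V - U| / V := by rw [abs_div, abs_of_pos hv]
  have hVU : |V - U| ≤ ∑ i, |u i - v i| := by
    rw [← sum_sub_distrib]
    exact (abs_sum_le_sum_abs _ _).trans_eq (sum_congr rfl fun i _ => abs_sub_comm _ _)
  calc ∑ i, |u i / U - v i / V| ≤ ∑ i, (|u i - v i| / V + u i * |U⁻¹ - V⁻¹|) :=
        sum_le_sum fun i _ => hsplit i
    _ = (∑ i, |u i - v i|) / V + U * |U⁻¹ - V⁻¹| := by
        rw [sum_add_distrib, sum_div, sum_mul]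
    _ ≤ (∑ i, |u i - v i|) / V + (∑ i, |u i - v i|) / V := by
        gcongr
        exact hscale.trans (div_le_div_of_nonneg_right hVU hv.le)
    _ = 2 * (∑ i, |u i - v i|) / ∑ j, v j := by ring

lemma tendsto_of_sum_abs_sub_le_geometric {f : ℕ → ι → ℝ} {g : ι → ℝ} {C r : ℝ}
    (hr₀ : 0 ≤ r) (hr₁ : r < 1) (h : ∀ N, ∑ i, |f N i - g i| ≤ C * r ^ N) :
    Tendsto f atTop (nhds g) := by
  refine tendsto_pi_nhds.2 fun i => tendsto_iff_dist_tendsto_zero.2 ?_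
  refine squeeze_zero (fun N => dist_nonneg) (fun N => ?_)
    (by simpa using (tendsto_pow_atTop_nhds_zero_of_lt_one hr₀ hr₁).const_mul C)
  exact (single_le_sum (fun j _ => abs_nonneg (f N j - g j)) (mem_univ i)).trans (h N)

end Normalization

section SimplexSeries

variable {ι : Type*} [Fintype ι] {w : ℕ → ℝ} {x : ℕ → ι → ℝ}

lemma summable_mul_apply_of_mem_stdSimplex (hw₀ : ∀ n, 0 ≤ w n) (hw : Summable w)
    (hx : ∀ n, x n ∈ stdSimplex ℝ ι) (i : ι) : Summable fun n => w n * x n i :=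
  hw.of_nonneg_of_le (fun n => mul_nonneg (hw₀ n) ((hx n).1 i))
    fun n => mul_le_of_le_one_right (hw₀ n) (mem_Icc_of_mem_stdSimplex (hx n) i).2

lemma sum_tsum_mul_apply_of_mem_stdSimplex (hw₀ : ∀ n, 0 ≤ w n) (hw : Summable w)
    (hx : ∀ n, x n ∈ stdSimplex ℝ ι) : ∑ i, ∑' n, w n * x n i = ∑' n, w n := by
  rw [← Summable.tsum_finsetSum fun i _ => summable_mul_apply_of_mem_stdSimplex hw₀ hw hx i]
  exact tsum_congr fun n => by rw [← mul_sum, (hx n).2, mul_one]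

end SimplexSeries

lemma summable_inv_pow_succ {β : ℝ} (hβ : 1 < β) : Summable fun n : ℕ => β⁻¹ ^ (n + 1) :=
  (summable_nat_add_iff 1).2 <|
    summable_geometric_of_lt_one (inv_nonneg.2 (by linarith)) (inv_lt_one_of_one_lt₀ hβ)

lemma tsum_inv_pow_succ {β : ℝ} (hβ : 1 < β) : ∑' n : ℕ, β⁻¹ ^ (n + 1) = (β - 1)⁻¹ := by
  simp_rw [pow_succ]
  rw [tsum_mul_right, tsum_geometric_of_lt_one (inv_nonneg.2 (by linarith))
    (inv_lt_one_of_one_lt₀ hβ)]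
  field_simp

lemma inv_pow_smul_eq_of_succ_eq {K E : Type*} [Field K] [AddCommGroup E] [Module K E]
    {α β : K} (hβ : β ≠ 0) {B ξ : ℕ → E} (h : ∀ n, B (n + 1) = β • B n + α • ξ n)
    (n : ℕ) : β⁻¹ ^ n • B n = B 0 + α • ∑ m ∈ range n, β⁻¹ ^ (m + 1) • ξ m := by
  induction n with
  | zero => simp
  | succ n ih =>
    have hcancel : β⁻¹ ^ (n + 1) • β • B n = β⁻¹ ^ n • B n := by
      rw [smul_smul, pow_succ, mul_assoc, inv_mul_cancel₀ hβ, mul_one]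
    rw [h, smul_add, hcancel, ih, sum_range_succ, smul_add, add_assoc, smul_comm α]

section Urn

variable {ι : Type*} (α β : ℝ) (b₀ B₀ : ι → ℝ) (x : ℕ → ι → ℝ)

/-- `β⁻ᴺ N_N = β⁻ᴺ (b₀ + B_N)` for the urn whose draws are `x m = ξ_{m+1}`. -/
noncomputable def rescaledComposition (N : ℕ) : ι → ℝ :=
  β⁻¹ ^ N • b₀ + B₀ + α • ∑ m ∈ range N, β⁻¹ ^ (m + 1) • x m

/-- `(|B₀| + α / (β - 1)) ψ_∞`, the limit of `rescaledComposition`. -/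
noncomputable def limitComposition (i : ι) : ℝ :=
  B₀ i + α * ∑' n, β⁻¹ ^ (n + 1) * x n i

@[simp]
lemma rescaledComposition_apply (N : ℕ) (i : ι) :
    rescaledComposition α β b₀ B₀ x N i =
      β⁻¹ ^ N * b₀ i + B₀ i + α * ∑ m ∈ range N, β⁻¹ ^ (m + 1) * x m i := by
  simp [rescaledComposition, Finset.sum_apply]

variable {α β b₀ B₀ x}

lemma rescaledComposition_nonneg (hα : 0 ≤ α) (hβ : 0 ≤ β) (hb₀ : ∀ i, 0 ≤ b₀ i)
    (hB₀ : ∀ i, 0 ≤ B₀ i) (hx : ∀ n i, 0 ≤ x n i) (N : ℕ) (i : ι) :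
    0 ≤ rescaledComposition α β b₀ B₀ x N i := by
  have hβ' : 0 ≤ β⁻¹ := inv_nonneg.2 hβ
  rw [rescaledComposition_apply]
  exact add_nonneg (add_nonneg (mul_nonneg (pow_nonneg hβ' N) (hb₀ i)) (hB₀ i)) <|
    mul_nonneg hα <| sum_nonneg fun m _ => mul_nonneg (pow_nonneg hβ' (m + 1)) (hx m i)

lemma inv_pow_smul_eq_rescaledComposition (hβ : β ≠ 0) {B : ℕ → ι → ℝ} (hB₀ : B 0 = B₀)
    (hB : ∀ n, B (n + 1) = β • B n + α • x n) (N : ℕ) :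
    β⁻¹ ^ N • (b₀ + B N) = rescaledComposition α β b₀ B₀ x N := by
  rw [smul_add, inv_pow_smul_eq_of_succ_eq hβ hB, hB₀, ← add_assoc]
  rfl

lemma le_limitComposition (hα : 0 ≤ α) (hβ : 0 ≤ β) (hx : ∀ n i, 0 ≤ x n i) (i : ι) :
    B₀ i ≤ limitComposition α β B₀ x i :=
  le_add_of_nonneg_right <| mul_nonneg hα <|
    tsum_nonneg fun n => mul_nonneg (pow_nonneg (inv_nonneg.2 hβ) (n + 1)) (hx n i)

variable [Fintype ι]

lemma sum_limitComposition (hβ : 1 < β) (hx : ∀ n, x n ∈ stdSimplex ℝ ι) :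
    ∑ i, limitComposition α β B₀ x i = ∑ i, B₀ i + α / (β - 1) := by
  have hw₀ : ∀ n : ℕ, 0 ≤ β⁻¹ ^ (n + 1) := fun n => by positivity
  simp only [limitComposition, sum_add_distrib, ← mul_sum]
  rw [sum_tsum_mul_apply_of_mem_stdSimplex hw₀ (summable_inv_pow_succ hβ) hx,
    tsum_inv_pow_succ hβ, div_eq_mul_inv]

lemma rescaledComposition_div_sum (hβ : β ≠ 0) {B : ℕ → ι → ℝ} (hB₀ : B 0 = B₀)
    (hB : ∀ n, B (n + 1) = β • B n + α • x n) (N : ℕ) (i : ι) :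
    rescaledComposition α β b₀ B₀ x N i / ∑ j, rescaledComposition α β b₀ B₀ x N j =
      (b₀ i + B N i) / ∑ j, (b₀ j + B N j) := by
  simp only [← inv_pow_smul_eq_rescaledComposition hβ hB₀ hB, Pi.smul_apply, Pi.add_apply,
    smul_eq_mul]
  exact mul_div_sum_mul (pow_ne_zero N (inv_ne_zero hβ)) (b₀ + B N) i

lemma limitComposition_div_sum (hβ : 1 < β) (hx : ∀ n, x n ∈ stdSimplex ℝ ι) (i : ι) :
    limitComposition α β B₀ x i / ∑ j, limitComposition α β B₀ x j =
      (B₀ i + α * ∑' n, β⁻¹ ^ (n + 1) * x n i) / (∑ j, B₀ j + α / (β - 1)) := by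
  rw [sum_limitComposition hβ hx]
  rfl

lemma limitComposition_sub_rescaledComposition (hβ : 1 < β) (hx : ∀ n, x n ∈ stdSimplex ℝ ι)
    (N : ℕ) (i : ι) :
    limitComposition α β B₀ x i - rescaledComposition α β b₀ B₀ x N i =
      α * ∑' n, β⁻¹ ^ (n + N + 1) * x (n + N) i - β⁻¹ ^ N * b₀ i := by
  have hw₀ : ∀ n : ℕ, 0 ≤ β⁻¹ ^ (n + 1) := fun n => by positivity
  rw [rescaledComposition_apply, limitComposition, ← (summable_mul_apply_of_mem_stdSimplex hw₀
    (summable_inv_pow_succ hβ) hx i).sum_add_tsum_nat_add N]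
  ring

lemma sum_abs_rescaledComposition_sub_limitComposition_le (hα : 0 ≤ α) (hβ : 1 < β)
    (hb₀ : ∀ i, 0 ≤ b₀ i) (hx : ∀ n, x n ∈ stdSimplex ℝ ι) (N : ℕ) :
    ∑ i, |rescaledComposition α β b₀ B₀ x N i - limitComposition α β B₀ x i| ≤
      β⁻¹ ^ N * (∑ i, b₀ i + α / (β - 1)) := by
  have hw₀ : ∀ n : ℕ, 0 ≤ β⁻¹ ^ (n + N + 1) := fun n => by positivity
  have hw : Summable fun n : ℕ => β⁻¹ ^ (n + N + 1) :=
    (summable_nat_add_iff N).2 (summable_inv_pow_succ hβ)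
  have htail : ∑' n : ℕ, β⁻¹ ^ (n + N + 1) = β⁻¹ ^ N * (β - 1)⁻¹ := by
    rw [← tsum_inv_pow_succ hβ, ← tsum_mul_left]
    exact tsum_congr fun n => by ring
  calc ∑ i, |rescaledComposition α β b₀ B₀ x N i - limitComposition α β B₀ x i|
      = ∑ i, |α * ∑' n, β⁻¹ ^ (n + N + 1) * x (n + N) i - β⁻¹ ^ N * b₀ i| := by
        simp_rw [abs_sub_comm (rescaledComposition _ _ _ _ _ _ _),
          limitComposition_sub_rescaledComposition hβ hx]
    _ ≤ ∑ i, (α * ∑' n, β⁻¹ ^ (n + N + 1) * x (n + N) i + β⁻¹ ^ N * b₀ i) := by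
        refine sum_le_sum fun i _ => (abs_sub _ _).trans_eq ?_
        rw [abs_of_nonneg (mul_nonneg (by positivity) (hb₀ i)), abs_of_nonneg (mul_nonneg hα
          (tsum_nonneg fun n => mul_nonneg (hw₀ n) ((hx (n + N)).1 i)))]
    _ = α * ∑' n : ℕ, β⁻¹ ^ (n + N + 1) + β⁻¹ ^ N * ∑ i, b₀ i := by
        rw [sum_add_distrib, ← mul_sum, ← mul_sum,
          sum_tsum_mul_apply_of_mem_stdSimplex hw₀ hw fun n => hx (n + N)]
    _ = β⁻¹ ^ N * (∑ i, b₀ i + α / (β - 1)) := by rw [htail]; ring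

lemma sum_limitComposition_pos (hα : 0 < α) (hβ : 1 < β) (hB₀ : ∀ i, 0 ≤ B₀ i)
    (hx : ∀ n, x n ∈ stdSimplex ℝ ι) : 0 < ∑ i, limitComposition α β B₀ x i := by
  rw [sum_limitComposition hβ hx]
  exact add_pos_of_nonneg_of_pos (sum_nonneg fun i _ => hB₀ i) (div_pos hα (by linarith))

lemma sum_abs_normalized_rescaledComposition_sub_le (hα : 0 < α) (hβ : 1 < β)
    (hb₀ : ∀ i, 0 ≤ b₀ i) (hB₀ : ∀ i, 0 ≤ B₀ i) (hx : ∀ n, x n ∈ stdSimplex ℝ ι) (N : ℕ) :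
    ∑ i, |rescaledComposition α β b₀ B₀ x N i / ∑ j, rescaledComposition α β b₀ B₀ x N j -
        limitComposition α β B₀ x i / ∑ j, limitComposition α β B₀ x j| ≤
      2 * (∑ i, b₀ i + α / (β - 1)) / (∑ i, B₀ i + α / (β - 1)) * β⁻¹ ^ N := by
  have hsum := sum_limitComposition (α := α) (B₀ := B₀) hβ hx
  have hpos := sum_limitComposition_pos hα hβ hB₀ hx
  calc _ ≤ 2 * (∑ i, |rescaledComposition α β b₀ B₀ x N i - limitComposition α β B₀ x i|) /
          ∑ j, limitComposition α β B₀ x j :=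
        sum_abs_div_sum_sub_div_sum_le
          (rescaledComposition_nonneg hα.le (by linarith) hb₀ hB₀ (fun n => (hx n).1) N) hpos
    _ ≤ 2 * (β⁻¹ ^ N * (∑ i, b₀ i + α / (β - 1))) / ∑ j, limitComposition α β B₀ x j := by
        gcongr
        exact sum_abs_rescaledComposition_sub_limitComposition_le hα.le hβ hb₀ hx N
    _ = _ := by rw [hsum]; ring

end Urn

theorem rp_urn_psi_convergence_beta_gt_one_general
    {Ω : Type*} {mΩ : MeasurableSpace Ω} {μ : Measure Ω}
    (k : ℕ) (hk : 2 ≤ k)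
    (α β : ℝ) (hα : 0 < α) (hβ : 1 < β)
    (b₀ B₀ : Fin k → ℝ) (hb₀nn : ∀ i, 0 ≤ b₀ i) (hB₀nn : ∀ i, 0 ≤ B₀ i)
    (ξ B : ℕ → Ω → Fin k → ℝ)
    (hξval : ∀ n, 1 ≤ n → ∀ ω, ∃ i, ξ n ω = Pi.single i 1)
    (hB0 : ∀ ω, B 0 ω = B₀)
    (hBrec : ∀ n ω, B (n + 1) ω = β • B n ω + α • ξ (n + 1) ω)
    (ψ : ℕ → Ω → Fin k → ℝ)
    (hψ : ∀ n ω i, ψ n ω i = (b₀ i + B n ω i) / ∑ j, (b₀ j + B n ω j))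
    (ψinf : Ω → Fin k → ℝ)
    (hψinf : ∀ ω i,
      ψinf ω i = (B₀ i + α * ∑' n : ℕ, β⁻¹ ^ (n + 1) * ξ (n + 1) ω i)
          / ((∑ j, B₀ j) + α / (β - 1))) :
    (∀ᵐ ω ∂μ, Tendsto (fun N : ℕ => ψ N ω) atTop (nhds (ψinf ω)))
      ∧
    (∃ C : ℝ, ∀ᵐ ω ∂μ, ∀ N : ℕ, ∑ i, |ψ N ω i - ψinf ω i| ≤ C * β⁻¹ ^ N)
      ∧
    (∀ᵐ ω ∂μ, (∀ i, ψinf ω i ∈ Set.Icc (0 : ℝ) 1) ∧ ∑ i, ψinf ω i = 1)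
      ∧
    ((∀ i, 0 < B₀ i) → ∀ᵐ ω ∂μ, ∀ i, ψinf ω i ∈ Set.Ioo (0 : ℝ) 1) := by
  have hβ₀ : β ≠ 0 := by positivity
  have hx ω n : ξ (n + 1) ω ∈ stdSimplex ℝ (Fin k) := by
    obtain ⟨i, hi⟩ := hξval (n + 1) (Nat.le_add_left 1 n) ω
    exact hi ▸ single_mem_stdSimplex ℝ i
  set G := fun ω => rescaledComposition α β b₀ B₀ (fun n => ξ (n + 1) ω)
  set Ginf := fun ω => limitComposition α β B₀ (fun n => ξ (n + 1) ω)
  have hψN ω N i : ψ N ω i = G ω N i / ∑ j, G ω N j :=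
    (hψ N ω i).trans (rescaledComposition_div_sum (B := (B · ω)) hβ₀ (hB0 ω) (hBrec · ω) N i).symm
  have hψlim ω i : ψinf ω i = Ginf ω i / ∑ j, Ginf ω j :=
    (hψinf ω i).trans (limitComposition_div_sum hβ (hx ω) i).symm
  have hGlim ω i : B₀ i ≤ Ginf ω i :=
    le_limitComposition hα.le (by linarith) (fun n => (hx ω n).1) i
  have hbound ω N : ∑ i, |ψ N ω i - ψinf ω i| ≤
      2 * (∑ i, b₀ i + α / (β - 1)) / (∑ i, B₀ i + α / (β - 1)) * β⁻¹ ^ N := by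
    simp_rw [hψN, hψlim]
    exact sum_abs_normalized_rescaledComposition_sub_le hα hβ hb₀nn hB₀nn (hx ω) N
  refine ⟨ae_of_all _ fun ω => tendsto_of_sum_abs_sub_le_geometric (by positivity)
      (inv_lt_one_of_one_lt₀ hβ) (hbound ω), ⟨_, ae_of_all _ hbound⟩,
    ae_of_all _ fun ω => ⟨fun i => ?_, ?_⟩, fun hB₀pos => ae_of_all _ fun ω i => ?_⟩
  · rw [hψlim]
    exact div_sum_mem_Icc (fun j => (hB₀nn j).trans (hGlim ω j)) i
  · simp_rw [hψlim]
    exact sum_div_sum_self (sum_limitComposition_pos hα hβ hB₀nn (hx ω)).ne'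
  · have : Nontrivial (Fin k) := Fin.nontrivial_iff_two_le.2 hk
    rw [hψlim]
    exact div_sum_mem_Ioo (fun j => (hB₀pos j).trans_le (hGlim ω j)) i

/-- **Rescaled Pólya urn, `β > 1`** (Theorem 3.5): the predictive mean `ψ_N` converges a.s.
to `ψ_∞ = (B₀ + α ∑_{n≥1} β^{-n} ξ_n)/(|B₀| + α/(β−1))`, with `|ψ_N − ψ_∞| = O(β^{-N})`
(`ℓ¹` norm); `ψ_∞` takes values in the simplex, and if `B₀ i > 0` for all `i` then a.s.
`ψ_{∞,i} ∈ (0,1)` for each `i`. -/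
theorem rp_urn_psi_convergence_beta_gt_one
    {Ω : Type*} {mΩ : MeasurableSpace Ω} {μ : Measure Ω} [IsProbabilityMeasure μ]
    (k : ℕ) (hk : 2 ≤ k)
    (α β : ℝ) (hα : 0 < α) (hβ : 1 < β)
    (b₀ B₀ : Fin k → ℝ) (hb₀nn : ∀ i, 0 ≤ b₀ i) (hB₀nn : ∀ i, 0 ≤ B₀ i)
    (hb₀pos : 0 < ∑ i, b₀ i) (hbB : ∀ i, 0 < b₀ i + B₀ i)
    (ξ B : ℕ → Ω → Fin k → ℝ) (ℱ : Filtration ℕ mΩ)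
    (hξval : ∀ n, 1 ≤ n → ∀ ω, ∃ i, ξ n ω = Pi.single i 1)
    (hadapt : ∀ n, 1 ≤ n → Measurable[ℱ n] (ξ n))
    (hB0 : ∀ ω, B 0 ω = B₀)
    (hBrec : ∀ n ω, B (n + 1) ω = β • B n ω + α • ξ (n + 1) ω)
    (ψ : ℕ → Ω → Fin k → ℝ)
    (hψ : ∀ n ω i, ψ n ω i = (b₀ i + B n ω i) / ∑ j, (b₀ j + B n ω j))
    (hcond : ∀ n i, μ[fun ω => ξ (n + 1) ω i | ℱ n] =ᵐ[μ] fun ω => ψ n ω i)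
    (ψinf : Ω → Fin k → ℝ)
    (hψinf : ∀ ω i,
      ψinf ω i = (B₀ i + α * ∑' n : ℕ, β⁻¹ ^ (n + 1) * ξ (n + 1) ω i)
          / ((∑ j, B₀ j) + α / (β - 1))) :
    (∀ᵐ ω ∂μ, Tendsto (fun N : ℕ => ψ N ω) atTop (nhds (ψinf ω)))
      ∧
    (∃ C : ℝ, ∀ᵐ ω ∂μ, ∀ N : ℕ, ∑ i, |ψ N ω i - ψinf ω i| ≤ C * β⁻¹ ^ N)
      ∧
    (∀ᵐ ω ∂μ, (∀ i, ψinf ω i ∈ Set.Icc (0 : ℝ) 1) ∧ ∑ i, ψinf ω i = 1)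
      ∧
    ((∀ i, 0 < B₀ i) → ∀ᵐ ω ∂μ, ∀ i, ψinf ω i ∈ Set.Ioo (0 : ℝ) 1) :=
  rp_urn_psi_convergence_beta_gt_one_general (mΩ := mΩ) k hk α β hα hβ b₀ B₀ hb₀nn hB₀nn ξ B hξval
    hB0 hBrec ψ hψ ψinf hψinf
end

section
/- Let S* = {x ∈ ℝ^k : xᵢ ≥ 0, Σᵢ xᵢ = 1} be the standard simplex and {e₁,…,e_k} the canonical basis of ℝ^k. There exist two measurable functions h⁽¹⁾, h⁽²⁾ : S* × S* × (0,1) → {e₁,…,e_k} such that for all x, y ∈ S*: (i) ∫₀¹ 1{h⁽¹⁾(x,y,u) = eᵢ} du = xᵢ and ∫₀¹ 1{h⁽²⁾(x,y,u) = eᵢ} du = yᵢ for every i = 1,…,k; (ii) ∫₀¹ 1{h⁽¹⁾(x,y,u) ≠ h⁽²⁾(x,y,u)} du ≤ |x − y|/2; and consequently (iii) ∫₀¹ |h⁽¹⁾(x,y,u) − h⁽²⁾(x,y,u)| du ≤ |x − y|, where |·| is the ℓ¹ norm on ℝ^k. -/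
/-!
Maximal coupling through quantile functions. For weights `w` on `Fin k`, cut `[0, ∑ w)` into
consecutive cells of lengths `w 0, …, w (k - 1)` and send `u` to the index of its cell; this pushes
Lebesgue measure forward to `w`. For `x, y` in the simplex, lay out the common part `min x y` on
`[0, ∑ min x y)` and the remainder `x - min x y` (resp. `y - min x y`) on the rest of `[0, 1)`.
Both index maps have the right laws and agree on the first interval, so they differ on a set of
length at most `1 - ∑ min x y = |x - y| / 2`; distinct basis vectors are at `ℓ¹` distance `2`.
-/

open MeasureTheory Set
open scoped Finset

lemma Pi.single_left_inj {ι M : Type*} [DecidableEq ι] [Zero M] {m : M} (hm : m ≠ 0) {a b : ι} :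
    (Pi.single a m : ι → M) = Pi.single b m ↔ a = b := by
  refine ⟨fun h => by_contra fun hab => hm ?_, fun h => h ▸ rfl⟩
  simpa [Pi.single_eq_of_ne hab] using congrFun h a

lemma sum_abs_sub_single_one {ι : Type*} [Fintype ι] [DecidableEq ι] (a b : ι) :
    ∑ i, |(Pi.single a 1 : ι → ℝ) i - (Pi.single b 1 : ι → ℝ) i| = if a = b then 0 else 2 := by
  split_ifs with hab
  · simp [hab]
  · rw [Fintype.sum_eq_add a b hab fun i hi => by simp [hi.1, hi.2]]
    norm_num [hab, Ne.symm hab]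

lemma setIntegral_Ioo_indicator_one {a b : ℝ} {s : Set ℝ} (hs : MeasurableSet s) :
    ∫ u in Ioo a b, s.indicator 1 u = volume.real (Ico a b ∩ s) := by
  rw [setIntegral_indicator hs, Pi.one_def, setIntegral_const, smul_eq_mul, mul_one]
  exact measureReal_congr (Ioo_ae_eq_Ico.inter ae_eq_rfl)

lemma sum_abs_sub_eq_two_mul_one_sub_sum_min {ι : Type*} [Fintype ι] {x y : ι → ℝ}
    (hx : x ∈ stdSimplex ℝ ι) (hy : y ∈ stdSimplex ℝ ι) :
    ∑ j, |x j - y j| = 2 * (1 - ∑ j, min (x j) (y j)) := by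
  have habs (a b : ℝ) : |a - b| = a + b - 2 * min a b := by
    rw [← max_sub_min_eq_abs', ← min_add_max a b]
    ring
  simp only [habs, Finset.sum_sub_distrib, Finset.sum_add_distrib, ← Finset.mul_sum, hx.2, hy.2]
  ring

namespace SimplexCoupling

variable {k : ℕ}

def cumSum (w : Fin k → ℝ) (n : ℕ) : ℝ := ∑ j with j.val < n, w j

@[simp] lemma cumSum_zero (w : Fin k → ℝ) : cumSum w 0 = 0 := by simp [cumSum]

lemma cumSum_of_le (w : Fin k → ℝ) {n : ℕ} (hn : k ≤ n) : cumSum w n = ∑ j, w j := by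
  rw [cumSum, Finset.filter_true_of_mem fun j _ => j.isLt.trans_le hn]

lemma cumSum_succ (w : Fin k → ℝ) (i : Fin k) : cumSum w (i + 1) = cumSum w i + w i := by
  rw [cumSum, cumSum, ← add_comm (w i), ← Finset.sum_insert (by simp)]
  congr 1
  ext j
  simp only [Finset.mem_filter, Finset.mem_univ, true_and, Finset.mem_insert, Fin.ext_iff]
  omega

lemma cumSum_mono {w : Fin k → ℝ} (hw : 0 ≤ w) : Monotone (cumSum w) := fun _ _ hmn =>
  Finset.sum_le_sum_of_subset_of_nonneg (Finset.monotone_filter_right _ fun _ _ h => h.trans_le hmn)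
    fun j _ _ => hw j

lemma Ico_cumSum_subset {w : Fin k → ℝ} (hw : 0 ≤ w) (i : Fin k) :
    Ico (cumSum w i) (cumSum w (i + 1)) ⊆ Ico 0 (∑ j, w j) := by
  rw [← cumSum_zero w, ← cumSum_of_le w le_rfl]
  exact Ico_subset_Ico (cumSum_mono hw (Nat.zero_le _)) (cumSum_mono hw i.isLt)

lemma exists_mem_Ico_cumSum {w : Fin k → ℝ} {u : ℝ} (hu : u ∈ Ico 0 (∑ j, w j)) :
    ∃ i : Fin k, u ∈ Ico (cumSum w i) (cumSum w (i + 1)) := by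
  classical
  have hk : u < cumSum w k := by rw [cumSum_of_le w le_rfl]; exact hu.2
  have hP : ∃ n, u < cumSum w n := ⟨k, hk⟩
  have hpos : 0 < Nat.find hP := Nat.pos_of_ne_zero fun h => by
    simpa [h] using (Nat.find_spec hP).trans_le' hu.1
  refine ⟨⟨Nat.find hP - 1, by have := Nat.find_min' hP hk; omega⟩, ?_, ?_⟩
  · exact not_lt.1 (Nat.find_min hP (Nat.sub_lt hpos one_pos))
  · simpa [Nat.sub_add_cancel hpos] using Nat.find_spec hP

/-- The index of the cell `[cumSum w i, cumSum w (i + 1))` containing `u`, found by counting the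
cells to its left; the cap at `k - 1` only matters for `u ≥ ∑ j, w j`. -/
noncomputable def quantileIndex [NeZero k] (w : Fin k → ℝ) (u : ℝ) : Fin k :=
  ⟨min (k - 1) #{j : Fin k | cumSum w (j + 1) ≤ u}, by have := NeZero.pos k; omega⟩

variable [NeZero k]

lemma quantileIndex_eq {w : Fin k → ℝ} (hw : 0 ≤ w) {u : ℝ} {i : Fin k}
    (hu : u ∈ Ico (cumSum w i) (cumSum w (i + 1))) : quantileIndex w u = i := by
  have hcells : ({j | cumSum w (j + 1) ≤ u} : Finset (Fin k)) = Finset.Iio i := by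
    ext j
    simp only [Finset.mem_filter, Finset.mem_univ, true_and, Finset.mem_Iio, Fin.lt_def]
    exact ⟨fun hj => lt_of_not_ge fun hij => (hu.2.trans_le (cumSum_mono hw (by omega))).not_ge hj,
      fun hij => (cumSum_mono hw hij).trans hu.1⟩
  ext
  simp only [quantileIndex, hcells, Fin.card_Iio]
  omega

lemma quantileIndex_eq_iff {w : Fin k → ℝ} (hw : 0 ≤ w) {u : ℝ} (hu : u ∈ Ico 0 (∑ j, w j))
    (i : Fin k) : quantileIndex w u = i ↔ u ∈ Ico (cumSum w i) (cumSum w (i + 1)) := by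
  refine ⟨fun h => ?_, quantileIndex_eq hw⟩
  obtain ⟨j, hj⟩ := exists_mem_Ico_cumSum hu
  rwa [← h, quantileIndex_eq hw hj]

@[fun_prop]
lemma Measurable.quantileIndex {α : Type*} [MeasurableSpace α] {f : α → Fin k → ℝ} {g : α → ℝ}
    (hf : Measurable f) (hg : Measurable g) : Measurable fun a => quantileIndex (f a) (g a) := by
  have hcount : Measurable fun a => #{j : Fin k | cumSum (f a) (j + 1) ≤ g a} := by
    simp_rw [Finset.card_filter]
    refine Finset.measurable_sum _ fun j _ =>
      Measurable.ite (measurableSet_le ?_ hg) measurable_const measurable_const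
    unfold cumSum
    fun_prop
  exact (measurable_of_countable fun n : ℕ =>
    (⟨min (k - 1) n, by have := NeZero.pos k; omega⟩ : Fin k)).comp hcount

noncomputable def concatQuantileIndex (m w : Fin k → ℝ) (u : ℝ) : Fin k :=
  if u < ∑ j, m j then quantileIndex m u else quantileIndex w (u - ∑ j, m j)

@[fun_prop]
lemma Measurable.concatQuantileIndex {α : Type*} [MeasurableSpace α] {f g : α → Fin k → ℝ}
    {t : α → ℝ} (hf : Measurable f) (hg : Measurable g) (ht : Measurable t) :
    Measurable fun a => concatQuantileIndex (f a) (g a) (t a) :=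
  Measurable.ite (measurableSet_lt ht (by fun_prop)) (by fun_prop) (by fun_prop)

lemma Ico_inter_concatQuantileIndex_preimage {m w : Fin k → ℝ} (hm : 0 ≤ m) (hw : 0 ≤ w)
    (i : Fin k) :
    Ico 0 (∑ j, m j + ∑ j, w j) ∩ concatQuantileIndex m w ⁻¹' {i} =
      Ico (cumSum m i) (cumSum m (i + 1)) ∪
        (· - ∑ j, m j) ⁻¹' Ico (cumSum w i) (cumSum w (i + 1)) := by
  set M := ∑ j, m j
  have hM : 0 ≤ M := Finset.sum_nonneg fun j _ => hm j
  have hW : 0 ≤ ∑ j, w j := Finset.sum_nonneg fun j _ => hw j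
  ext u
  simp only [mem_inter_iff, mem_preimage, mem_singleton_iff, mem_union, concatQuantileIndex]
  split_ifs with hu
  · have hright : u - M ∉ Ico (cumSum w i) (cumSum w (i + 1)) := fun h =>
      (Ico_cumSum_subset hw i h).1.not_gt (by linarith)
    refine ⟨fun ⟨hu0, h⟩ => .inl ((quantileIndex_eq_iff hm ⟨hu0.1, hu⟩ i).1 h), ?_⟩
    rintro (h | h)
    · exact ⟨⟨(Ico_cumSum_subset hm i h).1, by linarith⟩, quantileIndex_eq hm h⟩
    · exact absurd h hright
  · have hleft : u ∉ Ico (cumSum m i) (cumSum m (i + 1)) := fun h =>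
      hu (Ico_cumSum_subset hm i h).2
    refine ⟨fun ⟨hu0, h⟩ =>
      .inr ((quantileIndex_eq_iff hw ⟨by linarith, by linarith [hu0.2]⟩ i).1 h), ?_⟩
    rintro (h | h)
    · exact absurd h hleft
    · have := Ico_cumSum_subset hw i h
      exact ⟨⟨by linarith [this.1], by linarith [this.2]⟩, quantileIndex_eq hw h⟩

lemma volume_Ico_inter_concatQuantileIndex_preimage {m w : Fin k → ℝ} (hm : 0 ≤ m) (hw : 0 ≤ w)
    (i : Fin k) :
    volume (Ico 0 (∑ j, m j + ∑ j, w j) ∩ concatQuantileIndex m w ⁻¹' {i}) =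
      ENNReal.ofReal (m i + w i) := by
  have hdisj : Disjoint (Ico (cumSum m i) (cumSum m (i + 1)))
      ((· - ∑ j, m j) ⁻¹' Ico (cumSum w i) (cumSum w (i + 1))) :=
    Set.disjoint_left.2 fun u h₁ h₂ => by
      linarith [(Ico_cumSum_subset hm i h₁).2, (Ico_cumSum_subset hw i h₂).1]
  rw [Ico_inter_concatQuantileIndex_preimage hm hw,
    measure_union hdisj (measurableSet_Ico.preimage (measurable_sub_const _)),
    preimage_sub_const_Ico, Real.volume_Ico, Real.volume_Ico, cumSum_succ, cumSum_succ,
    ← ENNReal.ofReal_add (by simpa using hm i) (by simpa using hw i)]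
  congr 1
  ring

noncomputable def couplingIndex (x y : Fin k → ℝ) : ℝ → Fin k :=
  concatQuantileIndex (fun j => min (x j) (y j)) (fun j => x j - min (x j) (y j))

@[fun_prop]
lemma Measurable.couplingIndex {α : Type*} [MeasurableSpace α] {f g : α → Fin k → ℝ}
    {t : α → ℝ} (hf : Measurable f) (hg : Measurable g) (ht : Measurable t) :
    Measurable fun a => couplingIndex (f a) (g a) (t a) := by
  unfold SimplexCoupling.couplingIndex
  fun_prop

lemma couplingIndex_comm_of_lt {x y : Fin k → ℝ} {u : ℝ} (hu : u < ∑ j, min (x j) (y j)) :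
    couplingIndex x y u = couplingIndex y x u := by
  simp only [couplingIndex, concatQuantileIndex, min_comm (y _), if_pos hu]

lemma volume_Ico_inter_couplingIndex_preimage {x y : Fin k → ℝ} (hx : x ∈ stdSimplex ℝ (Fin k))
    (hy : y ∈ stdSimplex ℝ (Fin k)) (i : Fin k) :
    volume (Ico 0 1 ∩ couplingIndex x y ⁻¹' {i}) = ENNReal.ofReal (x i) := by
  have hsum : ∑ j, min (x j) (y j) + ∑ j, (x j - min (x j) (y j)) = 1 := by
    rw [← Finset.sum_add_distrib, ← hx.2]
    simp
  have := volume_Ico_inter_concatQuantileIndex_preimage (fun j => le_min (hx.1 j) (hy.1 j))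
    (fun j => sub_nonneg.2 (min_le_left (x j) (y j))) i
  rwa [hsum, add_sub_cancel] at this

lemma setIntegral_indicator_couplingIndex_preimage {x y : Fin k → ℝ}
    (hx : x ∈ stdSimplex ℝ (Fin k)) (hy : y ∈ stdSimplex ℝ (Fin k)) (i : Fin k) :
    ∫ u in Ioo 0 1, (couplingIndex x y ⁻¹' {i}).indicator 1 u = x i := by
  rw [setIntegral_Ioo_indicator_one ((by fun_prop : Measurable (couplingIndex x y))
      (measurableSet_singleton i)), measureReal_def,
    volume_Ico_inter_couplingIndex_preimage hx hy, ENNReal.toReal_ofReal (hx.1 i)]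

lemma setIntegral_indicator_couplingIndex_ne_le {x y : Fin k → ℝ}
    (hx : x ∈ stdSimplex ℝ (Fin k)) (hy : y ∈ stdSimplex ℝ (Fin k)) :
    ∫ u in Ioo 0 1, {u | couplingIndex x y u ≠ couplingIndex y x u}.indicator 1 u ≤
      (∑ j, |x j - y j|) / 2 := by
  have hmin : ∑ j, min (x j) (y j) ≤ 1 :=
    hx.2 ▸ Finset.sum_le_sum fun j _ => min_le_left (x j) (y j)
  calc ∫ u in Ioo 0 1, {u | couplingIndex x y u ≠ couplingIndex y x u}.indicator 1 u
      = volume.real (Ico 0 1 ∩ {u | couplingIndex x y u ≠ couplingIndex y x u}) :=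
        setIntegral_Ioo_indicator_one (measurableSet_eq_fun (by fun_prop) (by fun_prop)).compl
    _ ≤ volume.real (Ico (∑ j, min (x j) (y j)) 1) :=
        measureReal_mono (fun u ⟨hu, hne⟩ =>
          ⟨not_lt.1 fun h => hne (couplingIndex_comm_of_lt h), hu.2⟩) measure_Ico_lt_top.ne
    _ = (∑ j, |x j - y j|) / 2 := by
        rw [Real.volume_real_Ico_of_le hmin, sum_abs_sub_eq_two_mul_one_sub_sum_min hx hy]
        ring

end SimplexCoupling

open SimplexCoupling

/-- **Lemma A.7 (coupling functions on the simplex)**: there exist measurable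
`h⁽¹⁾, h⁽²⁾ : S* × S* × (0,1) → {e₁,…,e_k}` such that `h⁽¹⁾(x,y,·)` has law `x`,
`h⁽²⁾(x,y,·)` has law `y`, they differ on a set of measure at most `|x−y|/2`, and
`∫ |h⁽¹⁾ − h⁽²⁾| du ≤ |x−y|` (`ℓ¹` norm). -/
theorem simplex_coupling_functions (k : ℕ) (hk : 2 ≤ k) :
    ∃ h₁ h₂ : (Fin k → ℝ) → (Fin k → ℝ) → ℝ → (Fin k → ℝ),
      Measurable (fun p : (Fin k → ℝ) × (Fin k → ℝ) × ℝ => h₁ p.1 p.2.1 p.2.2) ∧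
      Measurable (fun p : (Fin k → ℝ) × (Fin k → ℝ) × ℝ => h₂ p.1 p.2.1 p.2.2) ∧
      ∀ x ∈ stdSimplex ℝ (Fin k), ∀ y ∈ stdSimplex ℝ (Fin k),
        (∀ u ∈ Set.Ioo (0 : ℝ) 1,
          (∃ i, h₁ x y u = Pi.single i 1) ∧ (∃ i, h₂ x y u = Pi.single i 1)) ∧
        (∀ i, (∫ u in Set.Ioo (0 : ℝ) 1,
            Set.indicator {u | h₁ x y u = Pi.single i 1} (fun _ => (1 : ℝ)) u) = x i) ∧
        (∀ i, (∫ u in Set.Ioo (0 : ℝ) 1,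
            Set.indicator {u | h₂ x y u = Pi.single i 1} (fun _ => (1 : ℝ)) u) = y i) ∧
        (∫ u in Set.Ioo (0 : ℝ) 1,
            Set.indicator {u | h₁ x y u ≠ h₂ x y u} (fun _ => (1 : ℝ)) u)
          ≤ (∑ i, |x i - y i|) / 2 ∧
        (∫ u in Set.Ioo (0 : ℝ) 1, ∑ i, |h₁ x y u i - h₂ x y u i|)
          ≤ ∑ i, |x i - y i| := by
  have : NeZero k := ⟨by omega⟩
  have hsingle : Measurable fun i : Fin k => (Pi.single i 1 : Fin k → ℝ) :=
    measurable_of_countable _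
  refine ⟨fun x y u => Pi.single (couplingIndex x y u) 1,
    fun x y u => Pi.single (couplingIndex y x u) 1,
    hsingle.comp (by fun_prop), hsingle.comp (by fun_prop), fun x hx y hy => ?_⟩
  simp only [Pi.single_left_inj one_ne_zero, ne_eq]
  have hdisagree := setIntegral_indicator_couplingIndex_ne_le hx hy
  refine ⟨fun _ _ => ⟨⟨_, rfl⟩, _, rfl⟩, setIntegral_indicator_couplingIndex_preimage hx hy,
    setIntegral_indicator_couplingIndex_preimage hy hx, hdisagree, ?_⟩
  have hdist (u : ℝ) : ∑ i, |(Pi.single (couplingIndex x y u) 1 : Fin k → ℝ) i -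
      (Pi.single (couplingIndex y x u) 1 : Fin k → ℝ) i| =
        2 * {u | couplingIndex x y u ≠ couplingIndex y x u}.indicator 1 u := by
    rw [sum_abs_sub_single_one]
    split_ifs with h <;> simp [h]
  simp_rw [hdist, integral_const_mul]
  linarith
end

section
/- Let β ∈ (0,1), α > 0, b₀ ∈ [0,∞)^k with |b₀| > 0, r = α/(1−β), r* = |b₀| + r, p₀ = b₀/|b₀| and γ = β + α/r* ∈ (β,1). Let S = {x ∈ ℝ^k : xᵢ ∈ [b₀ᵢ/r*, (b₀ᵢ+r)/r*], |x| = 1} with the ℓ¹ metric, and let P be the Markov kernel on S given by (Pf)(x) = Σ_{i=1}^k xᵢ f((βx + (1−γ)p₀)_{(i)}), where z_{(i)} denotes z with (γ−β) added to its i-th coordinate. Then P maps Lipschitz functions to Lipschitz functions with |Pf|_Lip ≤ γ |f|_Lip for every Lipschitz f on S; that is, P is a semi-contraction on Lip(S) with constant γ < 1. -/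
/-!
Write `Tᵢ z = βz + (1−γ)p₀ + (γ−β)eᵢ`, so that `(Pf)(x) = ∑ᵢ xᵢ f(Tᵢ x)`. Then
`Pf(y) − Pf(x) = ∑ᵢ yᵢ (f(Tᵢ y) − f(Tᵢ x)) + ∑ᵢ (yᵢ − xᵢ) f(Tᵢ x)`.
Each `Tᵢ` contracts the `ℓ¹` distance by `β`, so the first sum is at most `βK|y − x|`.
Since `∑ᵢ (yᵢ − xᵢ) = 0`, the second sum only sees the oscillation of `i ↦ f(Tᵢ x)`, which is at
most `K|Tᵢ x − Tⱼ x| ≤ 2(γ−β)K`; this bounds the second sum by `(γ−β)K|y − x|`.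
Finally, `Tᵢ z` is the convex combination `βz + (1−β)vᵢ` of `z` with a vertex `vᵢ` of the convex
set `S`, so the `Tᵢ` map `S` into itself.
-/

open Finset

variable {ι : Type*} [Fintype ι]

lemma abs_sum_mul_le_of_nonneg_of_sum_eq_one {w a : ι → ℝ} {B : ℝ} (hw : ∀ i, 0 ≤ w i)
    (hw₁ : ∑ i, w i = 1) (ha : ∀ i, |a i| ≤ B) : |∑ i, w i * a i| ≤ B :=
  calc |∑ i, w i * a i| ≤ ∑ i, |w i * a i| := abs_sum_le_sum_abs _ _
    _ ≤ ∑ i, w i * B := by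
        gcongr with i
        rw [abs_mul, abs_of_nonneg (hw i)]
        exact mul_le_mul_of_nonneg_left (ha i) (hw i)
    _ = B := by rw [← sum_mul, hw₁, one_mul]

lemma abs_sum_mul_le_of_sum_eq_zero {d g : ι → ℝ} {δ : ℝ} (hd : ∑ i, d i = 0)
    (hg : ∀ i j, |g i - g j| ≤ 2 * δ) : |∑ i, d i * g i| ≤ δ * ∑ i, |d i| := by
  rcases isEmpty_or_nonempty ι with hι | hι
  · simp
  obtain ⟨i₁, -, hi₁⟩ := exists_mem_eq_sup' univ_nonempty g
  obtain ⟨i₂, -, hi₂⟩ := exists_mem_eq_inf' univ_nonempty g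
  have hgc : ∀ i, |g i - (g i₁ + g i₂) / 2| ≤ δ := fun i => by
    have h₁ : g i ≤ g i₁ := hi₁ ▸ le_sup' g (mem_univ i)
    have h₂ : g i₂ ≤ g i := hi₂ ▸ inf'_le g (mem_univ i)
    have h₁₂ := abs_le.1 (hg i₁ i₂)
    rw [abs_le]
    constructor <;> linarith
  have hshift : ∑ i, d i * g i = ∑ i, d i * (g i - (g i₁ + g i₂) / 2) := by
    simp only [mul_sub, sum_sub_distrib, ← sum_mul, hd, zero_mul, sub_zero]
  calc |∑ i, d i * g i| ≤ ∑ i, |d i| * |g i - (g i₁ + g i₂) / 2| := by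
        rw [hshift]
        exact (abs_sum_le_sum_abs _ _).trans_eq (by simp only [abs_mul])
    _ ≤ ∑ i, |d i| * δ := by gcongr with i; exact hgc i
    _ = δ * ∑ i, |d i| := by rw [← sum_mul, mul_comm]

/-- From the probability vector `x`, the chain moves to `T i x` with probability `x i`. -/
def mixtureKernel (T : ι → (ι → ℝ) → ι → ℝ) (f : (ι → ℝ) → ℝ) (x : ι → ℝ) : ℝ :=
  ∑ i, x i * f (T i x)

lemma abs_mixtureKernel_sub_le {S : Set (ι → ℝ)} (hS : ∀ x ∈ S, (∀ i, 0 ≤ x i) ∧ ∑ i, x i = 1)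
    {T : ι → (ι → ℝ) → ι → ℝ} (hTS : ∀ i, ∀ x ∈ S, T i x ∈ S) {β δ : ℝ}
    (hT : ∀ i, ∀ x ∈ S, ∀ y ∈ S, ∑ j, |T i y j - T i x j| ≤ β * ∑ j, |y j - x j|)
    (hT_spread : ∀ x ∈ S, ∀ i i', ∑ j, |T i x j - T i' x j| ≤ 2 * δ)
    {f : (ι → ℝ) → ℝ} {K : ℝ} (hK : 0 ≤ K)
    (hf : ∀ x ∈ S, ∀ y ∈ S, |f y - f x| ≤ K * ∑ i, |y i - x i|) {x y : ι → ℝ}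
    (hx : x ∈ S) (hy : y ∈ S) :
    |mixtureKernel T f y - mixtureKernel T f x| ≤ (β + δ) * K * ∑ i, |y i - x i| := by
  obtain ⟨hy₀, hy₁⟩ := hS y hy
  have hdecomp : mixtureKernel T f y - mixtureKernel T f x
      = ∑ i, y i * (f (T i y) - f (T i x)) + ∑ i, (y i - x i) * f (T i x) := by
    simp only [mixtureKernel, mul_sub, sub_mul, sum_sub_distrib]
    ring
  have hmove : |∑ i, y i * (f (T i y) - f (T i x))| ≤ β * K * ∑ i, |y i - x i| :=
    abs_sum_mul_le_of_nonneg_of_sum_eq_one hy₀ hy₁ fun i =>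
      calc |f (T i y) - f (T i x)| ≤ K * ∑ j, |T i y j - T i x j| :=
            hf _ (hTS i x hx) _ (hTS i y hy)
        _ ≤ K * (β * ∑ j, |y j - x j|) := by gcongr; exact hT i x hx y hy
        _ = β * K * ∑ j, |y j - x j| := by ring
  have hweights : |∑ i, (y i - x i) * f (T i x)| ≤ δ * K * ∑ i, |y i - x i| := by
    have hsum : ∑ i, (y i - x i) = 0 := by rw [sum_sub_distrib, hy₁, (hS x hx).2, sub_self]
    refine (abs_sum_mul_le_of_sum_eq_zero (δ := δ * K) hsum fun i i' => ?_).trans_eq (by ring)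
    calc |f (T i x) - f (T i' x)| ≤ K * ∑ j, |T i x j - T i' x j| :=
          hf _ (hTS i' x hx) _ (hTS i x hx)
      _ ≤ K * (2 * δ) := by gcongr; exact hT_spread x hx i i'
      _ = 2 * (δ * K) := by ring
  rw [hdecomp]
  exact (abs_add_le _ _).trans (by linarith)

def cappedSimplex (lo : ι → ℝ) (ρ : ℝ) : Set (ι → ℝ) :=
  {x | (∀ i, lo i ≤ x i ∧ x i ≤ lo i + ρ) ∧ ∑ i, x i = 1}

lemma convex_cappedSimplex (lo : ι → ℝ) (ρ : ℝ) : Convex ℝ (cappedSimplex lo ρ) := by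
  rintro x ⟨hx, hx₁⟩ y ⟨hy, hy₁⟩ a b ha hb hab
  refine ⟨fun i => ?_, ?_⟩
  · simp only [Pi.add_apply, Pi.smul_apply, smul_eq_mul]
    obtain rfl : b = 1 - a := by linarith
    constructor <;> nlinarith [hx i, hy i]
  · simp only [Pi.add_apply, Pi.smul_apply, smul_eq_mul, sum_add_distrib, ← mul_sum, hx₁, hy₁]
    linarith

lemma nonneg_of_mem_cappedSimplex {lo : ι → ℝ} (hlo : ∀ i, 0 ≤ lo i) {ρ : ℝ} {x : ι → ℝ}
    (hx : x ∈ cappedSimplex lo ρ) (i : ι) : 0 ≤ x i :=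
  (hlo i).trans (hx.1 i).1

variable [DecidableEq ι]

def shiftStep (β a : ℝ) (c : ι → ℝ) (i : ι) (z : ι → ℝ) : ι → ℝ :=
  fun j => β * z j + c j + if j = i then a else 0

lemma sum_abs_shiftStep_sub (β a : ℝ) (c : ι → ℝ) (i : ι) (x y : ι → ℝ) :
    ∑ j, |shiftStep β a c i y j - shiftStep β a c i x j| = |β| * ∑ j, |y j - x j| := by
  rw [mul_sum]
  refine sum_congr rfl fun j _ => ?_
  rw [← abs_mul]
  congr 1
  simp only [shiftStep]
  ring

lemma sum_abs_shiftStep_sub_shiftStep_le (β a : ℝ) (c : ι → ℝ) (i i' : ι) (z : ι → ℝ) :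
    ∑ j, |shiftStep β a c i z j - shiftStep β a c i' z j| ≤ 2 * |a| :=
  calc ∑ j, |shiftStep β a c i z j - shiftStep β a c i' z j|
      ≤ ∑ j, (|if j = i then a else 0| + |if j = i' then a else 0|) := by
        gcongr with j
        simp only [shiftStep, add_sub_add_left_eq_sub]
        exact abs_sub _ _
    _ = 2 * |a| := by
        simp only [apply_ite (abs : ℝ → ℝ), abs_zero, sum_add_distrib, sum_ite_eq', mem_univ,
          if_true]
        ring

lemma vertex_mem_cappedSimplex {lo : ι → ℝ} {ρ : ℝ} (hρ : 0 ≤ ρ) (hsum : ∑ i, lo i + ρ = 1)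
    (i : ι) : (fun j => lo j + if j = i then ρ else 0) ∈ cappedSimplex lo ρ := by
  refine ⟨fun j => ?_, by rw [sum_add_distrib, sum_ite_eq', if_pos (mem_univ i), hsum]⟩
  dsimp only
  split_ifs <;> constructor <;> linarith

lemma shiftStep_mem_cappedSimplex {lo : ι → ℝ} {ρ β : ℝ} (hρ : 0 ≤ ρ) (hsum : ∑ i, lo i + ρ = 1)
    (hβ₀ : 0 ≤ β) (hβ₁ : β ≤ 1) (i : ι) {z : ι → ℝ} (hz : z ∈ cappedSimplex lo ρ) :
    shiftStep β ((1 - β) * ρ) (fun j => (1 - β) * lo j) i z ∈ cappedSimplex lo ρ := by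
  have hcomb : shiftStep β ((1 - β) * ρ) (fun j => (1 - β) * lo j) i z
      = β • z + (1 - β) • fun j => lo j + if j = i then ρ else 0 := by
    funext j
    simp only [shiftStep, Pi.add_apply, Pi.smul_apply, smul_eq_mul]
    split_ifs <;> ring
  rw [hcomb]
  exact convex_cappedSimplex lo ρ hz (vertex_mem_cappedSimplex hρ hsum i) hβ₀
    (sub_nonneg.2 hβ₁) (add_sub_cancel β 1)

theorem rp_urn_kernel_semicontraction_general
    (k : ℕ)
    (α β : ℝ) (hα : 0 < α) (hβ0 : 0 < β) (hβ1 : β < 1)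
    (b₀ : Fin k → ℝ) (hb₀nn : ∀ i, 0 ≤ b₀ i) (hb₀pos : 0 < ∑ i, b₀ i)
    (r rs : ℝ) (hr : r = α / (1 - β)) (hrs : rs = (∑ i, b₀ i) + r)
    (p₀ : Fin k → ℝ) (hp₀ : ∀ i, p₀ i = b₀ i / ∑ j, b₀ j)
    (γ : ℝ) (hγ : γ = β + α / rs)
    (S : Set (Fin k → ℝ))
    (hS : S = {x | (∀ i, b₀ i / rs ≤ x i ∧ x i ≤ (b₀ i + r) / rs) ∧ ∑ i, x i = 1})
    (Pop : ((Fin k → ℝ) → ℝ) → ((Fin k → ℝ) → ℝ))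
    (hPop : ∀ f x, Pop f x
        = ∑ i, x i * f (fun j => β * x j + (1 - γ) * p₀ j + if j = i then γ - β else 0)) :
    ∀ (f : (Fin k → ℝ) → ℝ) (K : ℝ), 0 ≤ K →
      (∀ x ∈ S, ∀ y ∈ S, |f y - f x| ≤ K * ∑ i, |y i - x i|) →
      (∀ x ∈ S, ∀ y ∈ S, |Pop f y - Pop f x| ≤ γ * K * ∑ i, |y i - x i|) := by
  intro f K hK hf x hx y hy
  have h1β : 0 < 1 - β := sub_pos.2 hβ1
  have hr₀ : 0 < r := hr ▸ div_pos hα h1β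
  have hrs₀ : 0 < rs := by linarith
  have hα_eq : α = (1 - β) * r := by rw [hr, mul_div_cancel₀ _ h1β.ne']
  have hsum : ∑ i, b₀ i / rs + r / rs = 1 := by rw [← sum_div, ← add_div, ← hrs, div_self hrs₀.ne']
  have hγ_eq : γ = β + (1 - β) * (r / rs) := by rw [hγ, hα_eq, mul_div_assoc]
  have hp₀_eq : (fun j => (1 - γ) * p₀ j) = fun j => (1 - β) * (b₀ j / rs) := by
    funext j
    rw [hp₀, hγ, hα_eq]
    field_simp
    rw [hrs]
    ring
  have hS_eq : S = cappedSimplex (fun i => b₀ i / rs) (r / rs) := by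
    simp only [hS, cappedSimplex, add_div]
  have hPop_eq : ∀ z, Pop f z = mixtureKernel
      (shiftStep β ((1 - β) * (r / rs)) fun j => (1 - β) * (b₀ j / rs)) f z := by
    intro z
    rw [hPop, ← hp₀_eq, show γ - β = (1 - β) * (r / rs) by linarith]
    rfl
  have hρ₀ : 0 ≤ r / rs := by positivity
  subst hS_eq
  rw [hPop_eq, hPop_eq, hγ_eq]
  refine abs_mixtureKernel_sub_le
    (fun z hz => ⟨nonneg_of_mem_cappedSimplex (fun i => div_nonneg (hb₀nn i) hrs₀.le) hz, hz.2⟩)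
    (fun i z hz => shiftStep_mem_cappedSimplex hρ₀ hsum hβ0.le hβ1.le i hz)
    (fun i x _ y _ => (sum_abs_shiftStep_sub _ _ _ i x y).trans_le (by rw [abs_of_pos hβ0]))
    (fun z _ i i' => (sum_abs_shiftStep_sub_shiftStep_le _ _ _ i i' z).trans_eq
      (by rw [abs_of_nonneg (mul_nonneg h1β.le hρ₀)]))
    hK hf hx hy

/-- **Semi-contraction of the predictive-mean kernel, `β ∈ (0,1)`**: the kernel
`(Pf)(x) = ∑ᵢ xᵢ f((βx + (1−γ)p₀)_{(i)})` on
`S = {x : xᵢ ∈ [b₀ᵢ/r*, (b₀ᵢ+r)/r*], |x| = 1}` satisfies `|Pf|_Lip ≤ γ |f|_Lip`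
for the `ℓ¹` metric: if `f` is `K`-Lipschitz on `S` then `Pf` is `γK`-Lipschitz on `S`. -/
theorem rp_urn_kernel_semicontraction
    (k : ℕ) (hk : 2 ≤ k)
    (α β : ℝ) (hα : 0 < α) (hβ0 : 0 < β) (hβ1 : β < 1)
    (b₀ : Fin k → ℝ) (hb₀nn : ∀ i, 0 ≤ b₀ i) (hb₀pos : 0 < ∑ i, b₀ i)
    (r rs : ℝ) (hr : r = α / (1 - β)) (hrs : rs = (∑ i, b₀ i) + r)
    (p₀ : Fin k → ℝ) (hp₀ : ∀ i, p₀ i = b₀ i / ∑ j, b₀ j)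
    (γ : ℝ) (hγ : γ = β + α / rs)
    (S : Set (Fin k → ℝ))
    (hS : S = {x | (∀ i, b₀ i / rs ≤ x i ∧ x i ≤ (b₀ i + r) / rs) ∧ ∑ i, x i = 1})
    (Pop : ((Fin k → ℝ) → ℝ) → ((Fin k → ℝ) → ℝ))
    (hPop : ∀ f x, Pop f x
        = ∑ i, x i * f (fun j => β * x j + (1 - γ) * p₀ j + if j = i then γ - β else 0)) :
    ∀ (f : (Fin k → ℝ) → ℝ) (K : ℝ), 0 ≤ K →
      (∀ x ∈ S, ∀ y ∈ S, |f y - f x| ≤ K * ∑ i, |y i - x i|) →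
      (∀ x ∈ S, ∀ y ∈ S, |Pop f y - Pop f x| ≤ γ * K * ∑ i, |y i - x i|) :=
  rp_urn_kernel_semicontraction_general k α β hα hβ0 hβ1 b₀ hb₀nn hb₀pos r rs hr hrs p₀ hp₀ γ hγ S
    hS Pop hPop
end

section
/- Let β ∈ (0,1), α > 0, b₀ ∈ [0,∞)^k with |b₀| > 0, r = α/(1−β), r* = |b₀| + r, p₀ = b₀/|b₀|, γ = β + α/r*, and let P be the Markov kernel on S = {x ∈ ℝ^k : xᵢ ∈ [b₀ᵢ/r*, (b₀ᵢ+r)/r*], |x| = 1} given by (Pf)(x) = Σ_{i=1}^k xᵢ f((βx + (1−γ)p₀)_{(i)}), where z_{(i)} denotes z with (γ−β) added to its i-th coordinate. Let π be an invariant probability measure of P. Then, for every initial distribution ν on S, the Markov chain (ψ_n) with kernel P and ψ₀ ~ ν converges in distribution to π; in particular π is the unique invariant probability measure of P. -/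
/-!
The `ℓ¹`-Lipschitz constant of a test function on `S` is contracted by the factor `γ < 1` under
the kernel: moving the starting point costs `β`, since every update map is a `β`-contraction, and
drawing different colours from two starting points, which a coupling does with probability half
their `ℓ¹` distance, costs the `ℓ¹` distance `2(γ - β)` between two update images. Hence for two
laws on `S` evolving under the kernel, the integrals of a bounded `L`-Lipschitz function differ
by at most `2γⁿL` after `n` steps. Comparing the law of `ψₙ` with the stationary `π` gives
convergence against bounded Lipschitz functions, which characterises weak convergence; comparing
two invariant laws gives uniqueness.
-/

open MeasureTheory Filter Finset Set Topology

lemma abs_sub_integral_le {X : Type*} [MeasurableSpace X] {ρ : Measure X}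
    [IsProbabilityMeasure ρ] {g : X → ℝ} (hg : Integrable g ρ) {a M : ℝ}
    (h : ∀ᵐ y ∂ρ, |a - g y| ≤ M) : |a - ∫ y, g y ∂ρ| ≤ M := by
  have hsub : a - ∫ y, g y ∂ρ = ∫ y, (a - g y) ∂ρ := by
    rw [integral_sub (integrable_const a) hg]
    simp
  rw [hsub]
  simpa using norm_integral_le_of_norm_le_const (μ := ρ) (f := fun y => a - g y) h

section Simplex

variable {ι : Type*} [Fintype ι]

/-- Since `∑ (x - y) = 0`, `h` may be recentred at the midpoint of its range. -/
lemma abs_sum_mul_sub_sum_mul_le {x y h : ι → ℝ} (hxy : ∑ i, x i = ∑ i, y i) {D : ℝ}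
    (hh : ∀ i j, |h i - h j| ≤ D) :
    |∑ i, x i * h i - ∑ i, y i * h i| ≤ D / 2 * ∑ i, |x i - y i| := by
  cases isEmpty_or_nonempty ι
  · simp
  obtain ⟨imax, himax⟩ := Finite.exists_max h
  obtain ⟨imin, himin⟩ := Finite.exists_min h
  set c := (h imax + h imin) / 2 with hc_def
  have hc : ∀ i, |h i - c| ≤ D / 2 := fun i => by
    have := (abs_le.1 (hh imax imin)).2
    rw [abs_le, hc_def]
    constructor <;> linarith [himax i, himin i]
  have hrecentre : ∑ i, x i * h i - ∑ i, y i * h i = ∑ i, (x i - y i) * (h i - c) := by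
    simp only [sub_mul, mul_sub, sum_sub_distrib, ← sum_mul, hxy]
    ring
  calc |∑ i, x i * h i - ∑ i, y i * h i|
      ≤ ∑ i, |x i - y i| * (D / 2) := by
        rw [hrecentre]
        refine (abs_sum_le_sum_abs _ _).trans (sum_le_sum fun i _ => ?_)
        rw [abs_mul]
        exact mul_le_mul_of_nonneg_left (hc i) (abs_nonneg _)
    _ = D / 2 * ∑ i, |x i - y i| := by rw [← sum_mul, mul_comm]

lemma sum_abs_sub_le_two {x y : ι → ℝ} (hx : x ∈ stdSimplex ℝ ι) (hy : y ∈ stdSimplex ℝ ι) :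
    ∑ i, |x i - y i| ≤ 2 :=
  calc ∑ i, |x i - y i| ≤ ∑ i, (x i + y i) :=
        sum_le_sum fun i _ => abs_sub_le_iff.2 ⟨by linarith [hy.1 i], by linarith [hx.1 i]⟩
    _ = 2 := by rw [sum_add_distrib, hx.2, hy.2]; norm_num

lemma abs_sum_mul_le {x h : ι → ℝ} (hx : x ∈ stdSimplex ℝ ι) {C : ℝ} (hh : ∀ i, |h i| ≤ C) :
    |∑ i, x i * h i| ≤ C :=
  calc |∑ i, x i * h i| ≤ ∑ i, x i * C := by
        refine (abs_sum_le_sum_abs _ _).trans (sum_le_sum fun i _ => ?_)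
        rw [abs_mul, abs_of_nonneg (hx.1 i)]
        exact mul_le_mul_of_nonneg_left (hh i) (hx.1 i)
    _ = C := by rw [← sum_mul, hx.2, one_mul]

lemma dist_le_sum_abs_sub (x y : ι → ℝ) : dist x y ≤ ∑ i, |x i - y i| :=
  (dist_pi_le_iff (sum_nonneg fun _ _ => abs_nonneg _)).2 fun i =>
    (Real.dist_eq _ _).trans_le
      (single_le_sum (f := fun j => |x j - y j|) (fun _ _ => abs_nonneg _) (mem_univ i))

def LipschitzOnWithL1 (L : ℝ) (g : (ι → ℝ) → ℝ) (S : Set (ι → ℝ)) : Prop :=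
  ∀ x ∈ S, ∀ y ∈ S, |g x - g y| ≤ L * ∑ i, |x i - y i|

lemma LipschitzWith.lipschitzOnWithL1 {L : NNReal} {g : (ι → ℝ) → ℝ} (hg : LipschitzWith L g)
    (S : Set (ι → ℝ)) : LipschitzOnWithL1 L g S := fun x _ y _ =>
  (hg.dist_le_mul x y).trans (mul_le_mul_of_nonneg_left (dist_le_sum_abs_sub x y) L.2)

lemma LipschitzOnWithL1.abs_integral_sub_integral_le {S : Set (ι → ℝ)}
    (hS : S ⊆ stdSimplex ℝ ι) {L : ℝ} (hL : 0 ≤ L) {g : (ι → ℝ) → ℝ}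
    (hg : LipschitzOnWithL1 L g S) {ν ρ : Measure (ι → ℝ)} [IsProbabilityMeasure ν]
    [IsProbabilityMeasure ρ] (hνS : ∀ᵐ x ∂ν, x ∈ S) (hρS : ∀ᵐ x ∂ρ, x ∈ S)
    (hgν : Integrable g ν) (hgρ : Integrable g ρ) :
    |∫ x, g x ∂ν - ∫ x, g x ∂ρ| ≤ 2 * L := by
  have hosc : ∀ x ∈ S, ∀ y ∈ S, |g x - g y| ≤ 2 * L := fun x hx y hy =>
    (hg x hx y hy).trans (by nlinarith [sum_abs_sub_le_two (hS hx) (hS hy)])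
  rw [abs_sub_comm]
  refine abs_sub_integral_le hgν (hνS.mono fun x hx => ?_)
  rw [abs_sub_comm]
  exact abs_sub_integral_le hgρ (hρS.mono fun y hy => hosc x hx y hy)

lemma abs_integral_sub_integral_le_of_contraction {S : Set (ι → ℝ)} (hS : S ⊆ stdSimplex ℝ ι)
    {γ : ℝ} (hγ : 0 ≤ γ) {Q : ((ι → ℝ) → ℝ) → (ι → ℝ) → ℝ}
    (hQm : ∀ g, Measurable g → Measurable (Q g))
    (hQb : ∀ g C, (∀ x, |g x| ≤ C) → ∀ x, |Q g x| ≤ C)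
    (hQL : ∀ g L, 0 ≤ L → LipschitzOnWithL1 L g S → LipschitzOnWithL1 (γ * L) (Q g) S)
    {ν ρ : ℕ → Measure (ι → ℝ)} [∀ n, IsProbabilityMeasure (ν n)]
    [∀ n, IsProbabilityMeasure (ρ n)] (hνS : ∀ n, ∀ᵐ x ∂ν n, x ∈ S)
    (hρS : ∀ n, ∀ᵐ x ∂ρ n, x ∈ S)
    (hν : ∀ n g C, Measurable g → (∀ x, |g x| ≤ C) →
      ∫ x, g x ∂ν (n + 1) = ∫ x, Q g x ∂ν n)
    (hρ : ∀ n g C, Measurable g → (∀ x, |g x| ≤ C) →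
      ∫ x, g x ∂ρ (n + 1) = ∫ x, Q g x ∂ρ n)
    (n : ℕ) {g : (ι → ℝ) → ℝ} {C L : ℝ} (hL : 0 ≤ L) (hgm : Measurable g)
    (hgC : ∀ x, |g x| ≤ C) (hgL : LipschitzOnWithL1 L g S) :
    |∫ x, g x ∂ν n - ∫ x, g x ∂ρ n| ≤ 2 * (γ ^ n * L) := by
  induction n generalizing g L with
  | zero =>
    simpa using hgL.abs_integral_sub_integral_le hS hL (hνS 0) (hρS 0)
      (.of_bound hgm.aestronglyMeasurable C (ae_of_all _ hgC))
      (.of_bound hgm.aestronglyMeasurable C (ae_of_all _ hgC))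
  | succ n ih =>
    rw [hν n g C hgm hgC, hρ n g C hgm hgC, pow_succ, mul_assoc]
    exact ih (mul_nonneg hγ hL) (hQm g hgm) (hQb g C hgC) (hQL g L hL hgL)

end Simplex

section UrnMap

variable {ι : Type*} [DecidableEq ι] {β γ : ℝ} {p₀ : ι → ℝ}

def urnMap (β γ : ℝ) (p₀ : ι → ℝ) (i : ι) (x : ι → ℝ) : ι → ℝ :=
  fun j => β * x j + (1 - γ) * p₀ j + if j = i then γ - β else 0

lemma continuous_urnMap (i : ι) : Continuous (urnMap β γ p₀ i) :=
  continuous_pi fun j => by unfold urnMap; fun_prop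

variable [Fintype ι]

def urnAverage (β γ : ℝ) (p₀ : ι → ℝ) (g : (ι → ℝ) → ℝ) (x : ι → ℝ) : ℝ :=
  ∑ i, x i * g (urnMap β γ p₀ i x)

lemma Measurable.urnAverage {g : (ι → ℝ) → ℝ} (hg : Measurable g) :
    Measurable (urnAverage β γ p₀ g) :=
  Finset.measurable_sum _ fun i _ =>
    (measurable_pi_apply i).mul (hg.comp (continuous_urnMap i).measurable)

lemma abs_urnAverage_le {g : (ι → ℝ) → ℝ} {C : ℝ} (hg : ∀ y, |g y| ≤ C) {x : ι → ℝ}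
    (hx : x ∈ stdSimplex ℝ ι) : |urnAverage β γ p₀ g x| ≤ C :=
  abs_sum_mul_le hx fun _ => hg _

lemma sum_abs_urnMap_sub_urnMap (hβ : 0 ≤ β) (i : ι) (x y : ι → ℝ) :
    ∑ j, |urnMap β γ p₀ i x j - urnMap β γ p₀ i y j| = β * ∑ j, |x j - y j| := by
  rw [mul_sum]
  refine sum_congr rfl fun j _ => ?_
  rw [← abs_of_nonneg hβ, ← abs_mul, abs_of_nonneg hβ]
  congr 1
  simp only [urnMap]
  ring

lemma sum_abs_urnMap_sub_urnMap_le (hβγ : β ≤ γ) (i i' : ι) (x : ι → ℝ) :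
    ∑ j, |urnMap β γ p₀ i x j - urnMap β γ p₀ i' x j| ≤ 2 * (γ - β) := by
  have hite : ∀ j (i : ι), 0 ≤ if j = i then γ - β else 0 := fun j i => by
    split_ifs <;> linarith
  calc ∑ j, |urnMap β γ p₀ i x j - urnMap β γ p₀ i' x j|
      = ∑ j, |(if j = i then γ - β else 0) - (if j = i' then γ - β else 0)| := by
        refine sum_congr rfl fun j _ => ?_
        simp only [urnMap]
        ring_nf
    _ ≤ ∑ j, ((if j = i then γ - β else 0) + (if j = i' then γ - β else 0)) :=
        sum_le_sum fun j _ =>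
          abs_sub_le_iff.2 ⟨by linarith [hite j i'], by linarith [hite j i]⟩
    _ = 2 * (γ - β) := by simp [sum_add_distrib]; ring

lemma LipschitzOnWithL1.urnAverage {S : Set (ι → ℝ)} (hS : S ⊆ stdSimplex ℝ ι)
    (hT : ∀ i, MapsTo (urnMap β γ p₀ i) S S) (hβ : 0 ≤ β) (hβγ : β ≤ γ)
    {L : ℝ} (hL : 0 ≤ L) {g : (ι → ℝ) → ℝ} (hg : LipschitzOnWithL1 L g S) :
    LipschitzOnWithL1 (γ * L) (urnAverage β γ p₀ g) S := by
  intro x hx y hy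
  set d := ∑ j, |x j - y j|
  have hsame : |∑ i, x i * (g (urnMap β γ p₀ i x) - g (urnMap β γ p₀ i y))| ≤ β * L * d :=
    abs_sum_mul_le (hS hx) fun i =>
      calc _ ≤ L * ∑ j, |urnMap β γ p₀ i x j - urnMap β γ p₀ i y j| :=
            hg _ (hT i hx) _ (hT i hy)
        _ = β * L * d := by rw [sum_abs_urnMap_sub_urnMap hβ]; ring
  have hcross : |∑ i, x i * g (urnMap β γ p₀ i y) - ∑ i, y i * g (urnMap β γ p₀ i y)|
      ≤ (γ - β) * L * d := by
    have := abs_sum_mul_sub_sum_mul_le ((hS hx).2.trans (hS hy).2.symm)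
      (D := 2 * (γ - β) * L) fun i i' =>
        calc _ ≤ L * ∑ j, |urnMap β γ p₀ i y j - urnMap β γ p₀ i' y j| :=
              hg _ (hT i hy) _ (hT i' hy)
          _ ≤ L * (2 * (γ - β)) :=
              mul_le_mul_of_nonneg_left (sum_abs_urnMap_sub_urnMap_le hβγ i i' y) hL
          _ = 2 * (γ - β) * L := by ring
    linarith
  calc |_root_.urnAverage β γ p₀ g x - _root_.urnAverage β γ p₀ g y|
      = |∑ i, x i * (g (urnMap β γ p₀ i x) - g (urnMap β γ p₀ i y))
          + (∑ i, x i * g (urnMap β γ p₀ i y) - ∑ i, y i * g (urnMap β γ p₀ i y))| := by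
        simp only [_root_.urnAverage, mul_sub, sum_sub_distrib]
        ring_nf
    _ ≤ β * L * d + (γ - β) * L * d := (abs_add_le _ _).trans (add_le_add hsame hcross)
    _ = γ * L * d := by ring

lemma tendsto_integral_sub_integral_urn {S : Set (ι → ℝ)} (hS : S ⊆ stdSimplex ℝ ι)
    (hSm : MeasurableSet S) (hT : ∀ i, MapsTo (urnMap β γ p₀ i) S S) (hβ : 0 ≤ β)
    (hβγ : β ≤ γ) (hγ : γ < 1) {ν ρ : ℕ → Measure (ι → ℝ)} [∀ n, IsProbabilityMeasure (ν n)]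
    [∀ n, IsProbabilityMeasure (ρ n)] (hνS : ∀ n, ∀ᵐ x ∂ν n, x ∈ S)
    (hρS : ∀ n, ∀ᵐ x ∂ρ n, x ∈ S)
    (hν : ∀ n g, Measurable g → (∃ C, ∀ x, |g x| ≤ C) →
      ∫ x, g x ∂ν (n + 1) = ∫ x, urnAverage β γ p₀ g x ∂ν n)
    (hρ : ∀ n g, Measurable g → (∃ C, ∀ x, |g x| ≤ C) →
      ∫ x, g x ∂ρ (n + 1) = ∫ x, urnAverage β γ p₀ g x ∂ρ n)
    {g : (ι → ℝ) → ℝ} (hgb : ∃ C, ∀ x y, dist (g x) (g y) ≤ C)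
    (hgL : ∃ L, LipschitzWith L g) :
    Tendsto (fun n => ∫ x, g x ∂ν n - ∫ x, g x ∂ρ n) atTop (𝓝 0) := by
  obtain ⟨L, hgL⟩ := hgL
  obtain ⟨C, hC⟩ := hgb
  have hgC : ∀ x, |g x| ≤ |g 0| + C := fun x => by
    have := hC x 0
    rw [Real.dist_eq] at this
    linarith [abs_sub_abs_le_abs_sub (g x) (g 0)]
  -- `urnAverage` is only bounded on `S`, so it is cut off outside `S`.
  set Q : ((ι → ℝ) → ℝ) → (ι → ℝ) → ℝ := fun g => S.indicator (urnAverage β γ p₀ g)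
  have hQb : ∀ g C, (∀ x, |g x| ≤ C) → ∀ x, |Q g x| ≤ C := fun g C hg x => by
    by_cases hx : x ∈ S
    · simpa [Q, hx] using abs_urnAverage_le hg (hS hx)
    · simpa [Q, hx] using (abs_nonneg _).trans (hg x)
  have hQL : ∀ g L, 0 ≤ L → LipschitzOnWithL1 L g S → LipschitzOnWithL1 (γ * L) (Q g) S :=
    fun g L hL hg x hx y hy => by
      simpa [Q, hx, hy] using hg.urnAverage hS hT hβ hβγ hL x hx y hy
  have hstep : ∀ (σ : ℕ → Measure (ι → ℝ)), (∀ n, ∀ᵐ x ∂σ n, x ∈ S) →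
      (∀ n g, Measurable g → (∃ C, ∀ x, |g x| ≤ C) →
        ∫ x, g x ∂σ (n + 1) = ∫ x, urnAverage β γ p₀ g x ∂σ n) →
      ∀ n g C, Measurable g → (∀ x, |g x| ≤ C) → ∫ x, g x ∂σ (n + 1) = ∫ x, Q g x ∂σ n :=
    fun σ hσS hσ n g C hg hgC => (hσ n g hg ⟨C, hgC⟩).trans <|
      integral_congr_ae <| (hσS n).mono fun x hx => (indicator_of_mem hx _).symm
  have hbound (n : ℕ) := abs_integral_sub_integral_le_of_contraction hS (hβ.trans hβγ)
    (fun g hg => hg.urnAverage.indicator hSm) hQb hQL hνS hρS (hstep ν hνS hν)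
    (hstep ρ hρS hρ) n L.2 hgL.continuous.measurable hgC (hgL.lipschitzOnWithL1 S)
  refine squeeze_zero_norm hbound ?_
  simpa using ((tendsto_pow_atTop_nhds_zero_of_lt_one (hβ.trans hβγ) hγ).mul_const
    (L : ℝ)).const_mul 2

end UrnMap

section WeakConvergence

variable {X : Type*} [MeasurableSpace X] [PseudoEMetricSpace X] [OpensMeasurableSpace X]

lemma tendsto_integral_of_forall_lipschitz {ν : ℕ → Measure X}
    [∀ n, IsProbabilityMeasure (ν n)] {π : Measure X} [IsProbabilityMeasure π]
    (h : ∀ g : X → ℝ, (∃ C, ∀ x y, dist (g x) (g y) ≤ C) → (∃ L, LipschitzWith L g) →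
      Tendsto (fun n => ∫ x, g x ∂ν n) atTop (𝓝 (∫ x, g x ∂π)))
    (f : BoundedContinuousFunction X ℝ) :
    Tendsto (fun n => ∫ x, f x ∂ν n) atTop (𝓝 (∫ x, f x ∂π)) :=
  ProbabilityMeasure.tendsto_iff_forall_integral_tendsto.1
    ((tendsto_iff_forall_lipschitz_integral_tendsto (μs := fun n => ⟨ν n, inferInstance⟩)
      (μ := ⟨π, inferInstance⟩)).2 h) f

lemma eq_of_forall_lipschitz_integral_eq [BorelSpace X] {π' π : Measure X}
    [IsProbabilityMeasure π'] [IsProbabilityMeasure π]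
    (h : ∀ g : X → ℝ, (∃ C, ∀ x y, dist (g x) (g y) ≤ C) → (∃ L, LipschitzWith L g) →
      ∫ x, g x ∂π' = ∫ x, g x ∂π) : π' = π :=
  ext_of_forall_integral_eq_of_IsFiniteMeasure fun f => tendsto_const_nhds_iff.1 <|
    tendsto_integral_of_forall_lipschitz (ν := fun _ => π')
      (fun g hgb hgL => by simpa only [h g hgb hgL] using tendsto_const_nhds) f

end WeakConvergence

lemma integral_map_succ_eq_of_condExp_eq {X Ω : Type*} [MeasurableSpace X]
    {mΩ : MeasurableSpace Ω} {μ : Measure Ω} [IsProbabilityMeasure μ] {ψ : ℕ → Ω → X}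
    {ℱ : Filtration ℕ mΩ} (hψ : ∀ n, Measurable[ℱ n] (ψ n)) {g P : X → ℝ} (hg : Measurable g)
    (hP : Measurable P) {n : ℕ}
    (h : μ[fun ω => g (ψ (n + 1) ω) | ℱ n] =ᵐ[μ] fun ω => P (ψ n ω)) :
    ∫ x, g x ∂μ.map (ψ (n + 1)) = ∫ x, P x ∂μ.map (ψ n) := by
  have hψm : ∀ n, Measurable (ψ n) := fun n => (hψ n).mono (ℱ.le n) le_rfl
  rw [integral_map (hψm _).aemeasurable hg.aestronglyMeasurable,
    integral_map (hψm _).aemeasurable hP.aestronglyMeasurable, ← integral_condExp (ℱ.le n)]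
  exact integral_congr_ae h

section UrnSimplex

variable {ι : Type*} [Fintype ι]

def urnSimplex (b₀ : ι → ℝ) (r rs : ℝ) : Set (ι → ℝ) :=
  {x | (∀ i, b₀ i / rs ≤ x i ∧ x i ≤ (b₀ i + r) / rs) ∧ ∑ i, x i = 1}

variable {b₀ : ι → ℝ} {r rs : ℝ}

lemma urnSimplex_subset_stdSimplex (hb₀ : ∀ i, 0 ≤ b₀ i) (hrs : 0 ≤ rs) :
    urnSimplex b₀ r rs ⊆ stdSimplex ℝ ι :=
  fun _ hx => ⟨fun i => (div_nonneg (hb₀ i) hrs).trans (hx.1 i).1, hx.2⟩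

lemma isClosed_urnSimplex : IsClosed (urnSimplex b₀ r rs) := by
  simp only [urnSimplex, ofPred_and, ofPred_forall]
  exact (isClosed_iInter fun i => (isClosed_le continuous_const (continuous_apply i)).inter
    (isClosed_le (continuous_apply i) continuous_const)).inter
    (isClosed_eq (continuous_finsetSum _ fun i _ => continuous_apply i) continuous_const)

lemma convex_urnSimplex : Convex ℝ (urnSimplex b₀ r rs) := by
  intro x hx y hy a b ha hb hab
  refine ⟨fun i => ⟨?_, ?_⟩, ?_⟩
  · have hlo : b₀ i / rs = a * (b₀ i / rs) + b * (b₀ i / rs) := by rw [← add_mul, hab, one_mul]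
    simp only [Pi.add_apply, Pi.smul_apply, smul_eq_mul]
    nlinarith [mul_le_mul_of_nonneg_left (hx.1 i).1 ha, mul_le_mul_of_nonneg_left (hy.1 i).1 hb]
  · have hhi : (b₀ i + r) / rs = a * ((b₀ i + r) / rs) + b * ((b₀ i + r) / rs) := by
      rw [← add_mul, hab, one_mul]
    simp only [Pi.add_apply, Pi.smul_apply, smul_eq_mul]
    nlinarith [mul_le_mul_of_nonneg_left (hx.1 i).2 ha, mul_le_mul_of_nonneg_left (hy.1 i).2 hb]
  · simp only [Pi.add_apply, Pi.smul_apply, smul_eq_mul, sum_add_distrib, ← mul_sum, hx.2,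
      hy.2]
    linarith

variable [DecidableEq ι]

/-- `(b₀ + r eᵢ) / rs` is a vertex of `urnSimplex b₀ r rs`. -/
lemma urnMap_eq_add_smul {β γ : ℝ} {p₀ : ι → ℝ} (hσ : 0 < ∑ i, b₀ i)
    (hrs : rs = ∑ i, b₀ i + r) (hrs0 : 0 < rs) (hp₀ : ∀ i, p₀ i = b₀ i / ∑ j, b₀ j)
    (hγ : γ = β + (1 - β) * r / rs) (i : ι) (x : ι → ℝ) :
    urnMap β γ p₀ i x = β • x + (1 - β) • fun j => (b₀ j + if j = i then r else 0) / rs := by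
  have hσ' : rs - r ≠ 0 := by linarith
  have hrs' : rs ≠ 0 := hrs0.ne'
  ext j
  simp only [urnMap, Pi.add_apply, Pi.smul_apply, smul_eq_mul, hp₀, hγ,
    show ∑ i, b₀ i = rs - r by linarith]
  split_ifs <;> field_simp <;> ring

lemma urnMap_mapsTo_urnSimplex {β γ : ℝ} {p₀ : ι → ℝ} (hσ : 0 < ∑ i, b₀ i) (hr : 0 ≤ r)
    (hrs : rs = ∑ i, b₀ i + r) (hp₀ : ∀ i, p₀ i = b₀ i / ∑ j, b₀ j) (hβ0 : 0 ≤ β) (hβ1 : β ≤ 1)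
    (hγ : γ = β + (1 - β) * r / rs) (i : ι) :
    MapsTo (urnMap β γ p₀ i) (urnSimplex b₀ r rs) (urnSimplex b₀ r rs) := by
  have hrs0 : 0 < rs := by linarith
  have hvertex : (fun j => (b₀ j + if j = i then r else 0) / rs) ∈ urnSimplex b₀ r rs := by
    refine ⟨fun j => ⟨?_, ?_⟩, ?_⟩
    · exact div_le_div_of_nonneg_right (by split_ifs <;> linarith) hrs0.le
    · exact div_le_div_of_nonneg_right (by split_ifs <;> linarith) hrs0.le
    · rw [← sum_div, sum_add_distrib, sum_ite_eq', if_pos (Finset.mem_univ i), ← hrs,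
        div_self hrs0.ne']
  intro x hx
  rw [urnMap_eq_add_smul hσ hrs hrs0 hp₀ hγ]
  exact convex_urnSimplex hx hvertex hβ0 (by linarith) (by ring)

end UrnSimplex

lemma urn_rate_lt_one {β σ r rs γ : ℝ} (hβ1 : β < 1) (hσ : 0 < σ) (hr : 0 ≤ r)
    (hrs : rs = σ + r) (hγ : γ = β + (1 - β) * r / rs) : γ < 1 := by
  have hrs0 : 0 < rs := by linarith
  rw [hγ, ← sub_pos, show 1 - (β + (1 - β) * r / rs) = (1 - β) * (1 - r / rs) by ring]
  exact mul_pos (by linarith) (sub_pos.2 ((div_lt_one hrs0).2 (by linarith)))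

theorem rp_urn_kernel_ergodicity_general
    (k : ℕ)
    (α β : ℝ) (hα : 0 < α) (hβ0 : 0 < β) (hβ1 : β < 1)
    (b₀ : Fin k → ℝ) (hb₀nn : ∀ i, 0 ≤ b₀ i) (hb₀pos : 0 < ∑ i, b₀ i)
    (r rs : ℝ) (hr : r = α / (1 - β)) (hrs : rs = (∑ i, b₀ i) + r)
    (p₀ : Fin k → ℝ) (hp₀ : ∀ i, p₀ i = b₀ i / ∑ j, b₀ j)
    (γ : ℝ) (hγ : γ = β + α / rs)
    (S : Set (Fin k → ℝ))
    (hS : S = {x | (∀ i, b₀ i / rs ≤ x i ∧ x i ≤ (b₀ i + r) / rs) ∧ ∑ i, x i = 1})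
    (Pop : ((Fin k → ℝ) → ℝ) → ((Fin k → ℝ) → ℝ))
    (hPop : ∀ f x, Pop f x
        = ∑ i, x i * f (fun j => β * x j + (1 - γ) * p₀ j + if j = i then γ - β else 0))
    (π : Measure (Fin k → ℝ)) (hπprob : IsProbabilityMeasure π) (hπS : π Sᶜ = 0)
    (hπinv : ∀ f : (Fin k → ℝ) → ℝ, Measurable f → (∃ C, ∀ x, |f x| ≤ C) →
      ∫ x, Pop f x ∂π = ∫ x, f x ∂π) :
    (∀ {Ω : Type} {mΩ : MeasurableSpace Ω} (μ : Measure Ω), IsProbabilityMeasure μ →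
      ∀ (ψ : ℕ → Ω → Fin k → ℝ) (ℱ : Filtration ℕ mΩ),
      (∀ n ω, ψ n ω ∈ S) →
      (∀ n, Measurable[ℱ n] (ψ n)) →
      (∀ (n : ℕ) (f : (Fin k → ℝ) → ℝ), Measurable f → (∃ C, ∀ x, |f x| ≤ C) →
        μ[fun ω => f (ψ (n + 1) ω) | ℱ n] =ᵐ[μ] fun ω => Pop f (ψ n ω)) →
      ∀ f : (Fin k → ℝ) → ℝ, Continuous f → (∃ C, ∀ x, |f x| ≤ C) →
        Tendsto (fun n : ℕ => ∫ ω, f (ψ n ω) ∂μ) atTop (nhds (∫ x, f x ∂π)))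
      ∧
    (∀ π' : Measure (Fin k → ℝ), IsProbabilityMeasure π' → π' Sᶜ = 0 →
      (∀ f : (Fin k → ℝ) → ℝ, Measurable f → (∃ C, ∀ x, |f x| ≤ C) →
        ∫ x, Pop f x ∂π' = ∫ x, f x ∂π') →
      π' = π) := by
  obtain rfl : Pop = urnAverage β γ p₀ := funext fun f => funext (hPop f)
  obtain rfl : S = urnSimplex b₀ r rs := hS
  have hr0 : 0 ≤ r := by rw [hr]; exact div_nonneg hα.le (by linarith)
  have hrs0 : 0 < rs := by linarith
  have hγ' : γ = β + (1 - β) * r / rs := by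
    rw [hγ, hr, mul_div_cancel₀ _ (by linarith : 1 - β ≠ 0)]
  have hβγ : β ≤ γ := by rw [hγ]; linarith [div_pos hα hrs0]
  have hcoupling := fun (ν ρ : ℕ → Measure (Fin k → ℝ)) [∀ n, IsProbabilityMeasure (ν n)]
      [∀ n, IsProbabilityMeasure (ρ n)] => tendsto_integral_sub_integral_urn (ν := ν) (ρ := ρ)
    (urnSimplex_subset_stdSimplex hb₀nn hrs0.le) isClosed_urnSimplex.measurableSet
    (urnMap_mapsTo_urnSimplex hb₀pos hr0 hrs hp₀ hβ0.le hβ1.le hγ') hβ0.le hβγ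
    (urn_rate_lt_one hβ1 hb₀pos hr0 hrs hγ')
  refine ⟨fun μ hμ ψ ℱ hψS hψ hMarkov f hf ⟨C, hC⟩ => ?_, fun π' hπ' hπ'S hπ'inv => ?_⟩
  · have hψm : ∀ n, Measurable (ψ n) := fun n => (hψ n).mono (ℱ.le n) le_rfl
    have : ∀ n, IsProbabilityMeasure (μ.map (ψ n)) :=
      fun n => Measure.isProbabilityMeasure_map (hψm n).aemeasurable
    have hlaw := tendsto_integral_of_forall_lipschitz (ν := fun n => μ.map (ψ n))
      (fun g hgb hgL => tendsto_sub_nhds_zero_iff.1 <| hcoupling _ (fun _ => π)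
        (fun n => (ae_map_iff (hψm n).aemeasurable isClosed_urnSimplex.measurableSet).2
          (ae_of_all _ (hψS n))) (fun _ => hπS)
        (fun n g hg hgC => integral_map_succ_eq_of_condExp_eq hψ hg hg.urnAverage
          (hMarkov n g hg hgC)) (fun _ g hg hgC => (hπinv g hg hgC).symm) hgb hgL)
      (.ofNormedAddCommGroup f hf C hC)
    simpa [integral_map (hψm _).aemeasurable hf.aestronglyMeasurable] using hlaw
  · refine eq_of_forall_lipschitz_integral_eq fun g hgb hgL => ?_
    exact sub_eq_zero.1 <| tendsto_const_nhds_iff.1 <| hcoupling (fun _ => π')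
      (fun _ => π) (fun _ => hπ'S) (fun _ => hπS) (fun _ g hg hgC => (hπ'inv g hg hgC).symm)
      (fun _ g hg hgC => (hπinv g hg hgC).symm) hgb hgL

/-- **Ergodicity of the predictive-mean chain, `β ∈ (0,1)`**: for any initial distribution,
the Markov chain with kernel `(Pf)(x) = ∑ᵢ xᵢ f((βx + (1−γ)p₀)_{(i)})` on `S` converges in
distribution to the invariant probability measure `π`; in particular `π` is the unique
invariant probability measure. -/
theorem rp_urn_kernel_ergodicity
    (k : ℕ) (hk : 2 ≤ k)
    (α β : ℝ) (hα : 0 < α) (hβ0 : 0 < β) (hβ1 : β < 1)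
    (b₀ : Fin k → ℝ) (hb₀nn : ∀ i, 0 ≤ b₀ i) (hb₀pos : 0 < ∑ i, b₀ i)
    (r rs : ℝ) (hr : r = α / (1 - β)) (hrs : rs = (∑ i, b₀ i) + r)
    (p₀ : Fin k → ℝ) (hp₀ : ∀ i, p₀ i = b₀ i / ∑ j, b₀ j)
    (γ : ℝ) (hγ : γ = β + α / rs)
    (S : Set (Fin k → ℝ))
    (hS : S = {x | (∀ i, b₀ i / rs ≤ x i ∧ x i ≤ (b₀ i + r) / rs) ∧ ∑ i, x i = 1})
    (Pop : ((Fin k → ℝ) → ℝ) → ((Fin k → ℝ) → ℝ))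
    (hPop : ∀ f x, Pop f x
        = ∑ i, x i * f (fun j => β * x j + (1 - γ) * p₀ j + if j = i then γ - β else 0))
    (π : Measure (Fin k → ℝ)) (hπprob : IsProbabilityMeasure π) (hπS : π Sᶜ = 0)
    (hπinv : ∀ f : (Fin k → ℝ) → ℝ, Measurable f → (∃ C, ∀ x, |f x| ≤ C) →
      ∫ x, Pop f x ∂π = ∫ x, f x ∂π) :
    (∀ {Ω : Type} {mΩ : MeasurableSpace Ω} (μ : Measure Ω), IsProbabilityMeasure μ →
      ∀ (ψ : ℕ → Ω → Fin k → ℝ) (ℱ : Filtration ℕ mΩ),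
      (∀ n ω, ψ n ω ∈ S) →
      (∀ n, Measurable[ℱ n] (ψ n)) →
      (∀ (n : ℕ) (f : (Fin k → ℝ) → ℝ), Measurable f → (∃ C, ∀ x, |f x| ≤ C) →
        μ[fun ω => f (ψ (n + 1) ω) | ℱ n] =ᵐ[μ] fun ω => Pop f (ψ n ω)) →
      ∀ f : (Fin k → ℝ) → ℝ, Continuous f → (∃ C, ∀ x, |f x| ≤ C) →
        Tendsto (fun n : ℕ => ∫ ω, f (ψ n ω) ∂μ) atTop (nhds (∫ x, f x ∂π)))
      ∧
    (∀ π' : Measure (Fin k → ℝ), IsProbabilityMeasure π' → π' Sᶜ = 0 →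
      (∀ f : (Fin k → ℝ) → ℝ, Measurable f → (∃ C, ∀ x, |f x| ≤ C) →
        ∫ x, Pop f x ∂π' = ∫ x, f x ∂π') →
      π' = π) :=
  rp_urn_kernel_ergodicity_general k α β hα hβ0 hβ1 b₀ hb₀nn hb₀pos r rs hr hrs p₀ hp₀ γ hγ S hS Pop
    hPop π hπprob hπS hπinv
end

section
/- Let β ∈ (0,1), α > 0, b₀ ∈ [0,∞)^k with |b₀| > 0, r = α/(1−β), r* = |b₀| + r, p₀ = b₀/|b₀|, γ = β + α/r*, and let π be the unique invariant probability measure of the kernel P on S = {x ∈ ℝ^k : xᵢ ∈ [b₀ᵢ/r*, (b₀ᵢ+r)/r*], |x| = 1} given by (Pf)(x) = Σ_{i=1}^k xᵢ f((βx + (1−γ)p₀)_{(i)}), where z_{(i)} denotes z with (γ−β) added to its i-th coordinate. Then the covariance matrix of π, Σ²_π = ∫_S (x − p₀)(x − p₀)ᵀ dπ(x), satisfies the identity diag(p₀) − p₀ p₀ᵀ = [((γ−β)² + (1 − γ²)) / (γ−β)²] · Σ²_π; equivalently Σ²_π = (γ−β)²/((γ−β)² + 1 − γ²) · (diag(p₀)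 − p₀ p₀ᵀ). -/
/-!
On the unit cube the kernel is the law of one urn step `y`, whose conditional mean is
`γ x + (1 - γ) p₀` and whose conditional covariance is `(γ - β)² (diag x - x xᵀ)`. Testing the
invariance of `π` against the coordinates gives the mean `p₀` (as `γ < 1`); testing it against
`(xᵢ - p₀ᵢ) (xⱼ - p₀ⱼ)` gives `Σ = γ² Σ + (γ - β)² (diag p₀ - p₀ p₀ᵀ - Σ)`, which is the identity.
Invariance is only assumed for bounded test functions, but since `π` and the jumps of the kernel
live in the cube, a polynomial test function may be composed with the retraction onto the cube.
-/

open MeasureTheory Finset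

section UrnStep

variable {ι : Type*} [DecidableEq ι]

/-- `(β x + (1 - γ) p)₍ₗ₎`: the next state of the predictive mean when colour `l` is drawn. -/
def urnStep (β γ : ℝ) (p x : ι → ℝ) (l : ι) : ι → ℝ :=
  fun m => β * x m + (1 - γ) * p m + if m = l then γ - β else 0

variable {β γ : ℝ} {p x : ι → ℝ}

theorem sum_mul_urnStep [Fintype ι] (hx : ∑ l, x l = 1) (m : ι) :
    ∑ l, x l * urnStep β γ p x l m = γ * x m + (1 - γ) * p m := by
  have hterm : ∀ l, x l * urnStep β γ p x l m
      = x l * (β * x m + (1 - γ) * p m) + (γ - β) * (if m = l then x l else 0) := by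
    intro l; unfold urnStep; split_ifs <;> ring
  simp only [hterm, sum_add_distrib, ← sum_mul, ← mul_sum, hx, sum_ite_eq, Finset.mem_univ, if_true]
  ring

theorem sum_mul_urnStep_sub_mul [Fintype ι] (hx : ∑ l, x l = 1) (i j : ι) :
    ∑ l, x l * ((urnStep β γ p x l i - p i) * (urnStep β γ p x l j - p j))
      = γ ^ 2 * ((x i - p i) * (x j - p j))
        + (γ - β) ^ 2 * ((if i = j then x i else 0) - x i * x j) := by
  set a : ι → ℝ := fun m => β * x m - γ * p m
  have hterm : ∀ l, x l * ((urnStep β γ p x l i - p i) * (urnStep β γ p x l j - p j))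
      = x l * (a i * a j) + (γ - β) * a i * (if j = l then x l else 0)
        + (γ - β) * a j * (if i = l then x l else 0)
        + (if i = j then (γ - β) ^ 2 else 0) * (if i = l then x l else 0) := by
    intro l
    unfold urnStep
    split_ifs <;> subst_vars <;> (try contradiction) <;> simp only [a] <;> ring
  simp only [hterm, sum_add_distrib, ← sum_mul, ← mul_sum, hx, sum_ite_eq, Finset.mem_univ, if_true]
  split_ifs <;> simp only [a] <;> ring

theorem urnStep_mem_Icc (hβ : 0 ≤ β) (hβγ : β ≤ γ) (hγ : γ ≤ 1) (hp : p ∈ Set.Icc 0 1)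
    (hx : x ∈ Set.Icc 0 1) (l : ι) : urnStep β γ p x l ∈ Set.Icc 0 1 := by
  obtain ⟨hx0, hx1⟩ : (∀ m, 0 ≤ x m) ∧ ∀ m, x m ≤ 1 := hx
  obtain ⟨hp0, hp1⟩ : (∀ m, 0 ≤ p m) ∧ ∀ m, p m ≤ 1 := hp
  refine ⟨fun m => ?_, fun m => ?_⟩ <;> simp only [urnStep, Pi.zero_apply, Pi.one_apply] <;>
    split_ifs <;> nlinarith [hx0 m, hx1 m, hp0 m, hp1 m]

end UrnStep

section CubeRetract

variable {ι : Type*}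

noncomputable def cubeRetract (x : ι → ℝ) : ι → ℝ := fun m => Set.projIcc 0 1 zero_le_one (x m)

theorem continuous_cubeRetract : Continuous (cubeRetract : (ι → ℝ) → ι → ℝ) :=
  continuous_pi fun m => continuous_subtype_val.comp (continuous_projIcc.comp (continuous_apply m))

theorem cubeRetract_mem_Icc (x : ι → ℝ) : cubeRetract x ∈ Set.Icc 0 1 :=
  ⟨fun m => (Set.projIcc 0 1 zero_le_one (x m)).2.1,
    fun m => (Set.projIcc 0 1 zero_le_one (x m)).2.2⟩

theorem cubeRetract_of_mem {x : ι → ℝ} (hx : x ∈ Set.Icc 0 1) : cubeRetract x = x :=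
  funext fun m => congrArg Subtype.val (Set.projIcc_of_mem zero_le_one ⟨hx.1 m, hx.2 m⟩)

theorem exists_bound_comp_cubeRetract {g : (ι → ℝ) → ℝ} (hg : Continuous g) :
    ∃ C, ∀ x, |g (cubeRetract x)| ≤ C := by
  obtain ⟨C, hC⟩ := isCompact_Icc.exists_bound_of_continuousOn (hg.continuousOn (s := Set.Icc 0 1))
  exact ⟨C, fun x => hC _ (cubeRetract_mem_Icc x)⟩

theorem integral_sum_mul_comp_eq_integral [Fintype ι] {π : Measure (ι → ℝ)}
    {Pop : ((ι → ℝ) → ℝ) → (ι → ℝ) → ℝ} {w : (ι → ℝ) → ι → ℝ} {step : (ι → ℝ) → ι → ι → ℝ}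
    (hPop : ∀ f x, Pop f x = ∑ l, w x l * f (step x l))
    (hinv : ∀ f : (ι → ℝ) → ℝ, Measurable f → (∃ C, ∀ x, |f x| ≤ C) →
      ∫ x, Pop f x ∂π = ∫ x, f x ∂π)
    (hπ : ∀ᵐ x ∂π, x ∈ Set.Icc 0 1 ∧ ∀ l, step x l ∈ Set.Icc 0 1)
    {g : (ι → ℝ) → ℝ} (hg : Continuous g) :
    ∫ x, ∑ l, w x l * g (step x l) ∂π = ∫ x, g x ∂π := by
  have hg' : Continuous (g ∘ cubeRetract) := hg.comp continuous_cubeRetract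
  calc ∫ x, ∑ l, w x l * g (step x l) ∂π = ∫ x, Pop (g ∘ cubeRetract) x ∂π := by
        refine integral_congr_ae (hπ.mono fun x hx => ?_)
        simp only [hPop, Function.comp_apply, cubeRetract_of_mem (hx.2 _)]
    _ = ∫ x, g (cubeRetract x) ∂π := hinv _ hg'.measurable (exists_bound_comp_cubeRetract hg)
    _ = ∫ x, g x ∂π := integral_congr_ae (hπ.mono fun x hx => by simp [cubeRetract_of_mem hx.1])

end CubeRetract

theorem Continuous.integrable_of_ae_mem_compact {X : Type*} [TopologicalSpace X] [T2Space X]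
    [MeasurableSpace X] [OpensMeasurableSpace X] {μ : Measure X} [IsFiniteMeasure μ]
    {K : Set X} (hK : IsCompact K) (hμ : ∀ᵐ x ∂μ, x ∈ K) {g : X → ℝ} (hg : Continuous g) :
    Integrable g μ := by
  simpa [IntegrableOn, Measure.restrict_eq_self_of_ae_mem hμ] using
    hg.continuousOn.integrableOn_compact (μ := μ) hK

section InvariantMoments

variable {ι : Type*} [Fintype ι] [DecidableEq ι] {β γ : ℝ} {p : ι → ℝ}
  {π : Measure (ι → ℝ)} [IsProbabilityMeasure π]

theorem integral_apply_eq_of_urnStep_invariant (hγ : γ ≠ 1)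
    (hinv : ∀ g : (ι → ℝ) → ℝ, Continuous g →
      ∫ x, ∑ l, x l * g (urnStep β γ p x l) ∂π = ∫ x, g x ∂π)
    (hπ : ∀ᵐ x ∂π, x ∈ Set.Icc 0 1 ∧ ∑ l, x l = 1) (m : ι) :
    ∫ x, x m ∂π = p m := by
  have hint : Integrable (fun x : ι → ℝ => x m) π :=
    (continuous_apply m).integrable_of_ae_mem_compact isCompact_Icc (hπ.mono fun x hx => hx.1)
  have h := hinv (fun x => x m) (continuous_apply m)
  rw [integral_congr_ae (hπ.mono fun x hx => sum_mul_urnStep hx.2 m),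
    integral_add (hint.const_mul γ) (integrable_const _), integral_const_mul, integral_const,
    probReal_univ, one_smul] at h
  have h' : (1 - γ) * (∫ x, x m ∂π - p m) = 0 := by linear_combination -h
  simpa [sub_eq_zero, Ne.symm hγ] using h'

theorem integral_sub_mul_sub_of_urnStep_invariant (hγ : γ ≠ 1)
    (hinv : ∀ g : (ι → ℝ) → ℝ, Continuous g →
      ∫ x, ∑ l, x l * g (urnStep β γ p x l) ∂π = ∫ x, g x ∂π)
    (hπ : ∀ᵐ x ∂π, x ∈ Set.Icc 0 1 ∧ ∑ l, x l = 1) (i j : ι) :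
    ((γ - β) ^ 2 + (1 - γ ^ 2)) * ∫ x, (x i - p i) * (x j - p j) ∂π
      = (γ - β) ^ 2 * ((if i = j then p i else 0) - p i * p j) := by
  have hint : ∀ g : (ι → ℝ) → ℝ, Continuous g → Integrable g π := fun g hg =>
    hg.integrable_of_ae_mem_compact isCompact_Icc (hπ.mono fun x hx => hx.1)
  have hmean := integral_apply_eq_of_urnStep_invariant hγ hinv hπ
  have h := hinv (fun x => (x i - p i) * (x j - p j)) (by fun_prop)
  have hsplit : ∀ᵐ x ∂π, ∑ l, x l * ((urnStep β γ p x l i - p i) * (urnStep β γ p x l j - p j))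
      = (γ ^ 2 - (γ - β) ^ 2) * ((x i - p i) * (x j - p j))
        + (γ - β) ^ 2 * ((if i = j then 1 else 0) * x i - p j * x i - p i * x j + p i * p j) :=
    hπ.mono fun x hx => by rw [sum_mul_urnStep_sub_mul hx.2]; split_ifs <;> ring
  rw [integral_congr_ae hsplit] at h
  simp (disch := exact hint _ (by fun_prop)) only [integral_add, integral_sub, integral_const_mul,
    integral_const, probReal_univ, one_smul, hmean] at h
  split_ifs at h ⊢ <;> linear_combination -h

end InvariantMoments

theorem rp_urn_invariant_covariance_general
    (k : ℕ)
    (α β : ℝ) (hα : 0 < α) (hβ0 : 0 < β) (hβ1 : β < 1)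
    (b₀ : Fin k → ℝ) (hb₀nn : ∀ i, 0 ≤ b₀ i) (hb₀pos : 0 < ∑ i, b₀ i)
    (r rs : ℝ) (hr : r = α / (1 - β)) (hrs : rs = (∑ i, b₀ i) + r)
    (p₀ : Fin k → ℝ) (hp₀ : ∀ i, p₀ i = b₀ i / ∑ j, b₀ j)
    (γ : ℝ) (hγ : γ = β + α / rs)
    (S : Set (Fin k → ℝ))
    (hS : S = {x | (∀ i, b₀ i / rs ≤ x i ∧ x i ≤ (b₀ i + r) / rs) ∧ ∑ i, x i = 1})
    (Pop : ((Fin k → ℝ) → ℝ) → ((Fin k → ℝ) → ℝ))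
    (hPop : ∀ f x, Pop f x
        = ∑ i, x i * f (fun j => β * x j + (1 - γ) * p₀ j + if j = i then γ - β else 0))
    (π : Measure (Fin k → ℝ)) (hπprob : IsProbabilityMeasure π) (hπS : π Sᶜ = 0)
    (hπinv : ∀ f : (Fin k → ℝ) → ℝ, Measurable f → (∃ C, ∀ x, |f x| ≤ C) →
      ∫ x, Pop f x ∂π = ∫ x, f x ∂π) :
    ∀ i j : Fin k,
      (if i = j then p₀ i else 0) - p₀ i * p₀ j
        = ((γ - β) ^ 2 + (1 - γ ^ 2)) / (γ - β) ^ 2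
            * ∫ x, (x i - p₀ i) * (x j - p₀ j) ∂π := by
  intro i j
  have hb_le : ∀ i, b₀ i ≤ ∑ j, b₀ j := fun i => single_le_sum (fun j _ => hb₀nn j) (mem_univ i)
  have hr0 : 0 < r := hr ▸ div_pos hα (sub_pos.2 hβ1)
  have hrs0 : 0 < rs := by rw [hrs]; positivity
  have hβγ : β < γ := by rw [hγ]; exact lt_add_of_pos_right β (by positivity)
  have hγ1 : γ < 1 := by
    have : α < (1 - β) * rs := by
      rw [hrs, hr, mul_add, mul_div_cancel₀ _ (sub_pos.2 hβ1).ne']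
      linarith [mul_pos (sub_pos.2 hβ1) hb₀pos]
    rw [hγ, ← lt_sub_iff_add_lt', div_lt_iff₀ hrs0]; linarith
  have hp : p₀ ∈ Set.Icc 0 1 :=
    ⟨fun i => by rw [Pi.zero_apply, hp₀]; exact div_nonneg (hb₀nn i) hb₀pos.le,
      fun i => by rw [Pi.one_apply, hp₀]; exact div_le_one_of_le₀ (hb_le i) hb₀pos.le⟩
  have hπS' : ∀ᵐ x ∂π, x ∈ Set.Icc 0 1 ∧ ∑ l, x l = 1 := by
    filter_upwards [mem_ae_iff.2 hπS] with x hx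
    rw [hS] at hx
    refine ⟨⟨fun m => (div_nonneg (hb₀nn m) hrs0.le).trans (hx.1 m).1, fun m => ?_⟩, hx.2⟩
    exact (hx.1 m).2.trans ((div_le_one hrs0).2 (by rw [hrs]; linarith [hb_le m]))
  have hinv := fun g (hg : Continuous g) => integral_sum_mul_comp_eq_integral hPop hπinv
    (hπS'.mono fun x hx => ⟨hx.1, urnStep_mem_Icc hβ0.le hβγ.le hγ1.le hp hx.1⟩) hg
  have hcov := integral_sub_mul_sub_of_urnStep_invariant hγ1.ne hinv hπS' i j
  rw [div_mul_eq_mul_div, eq_div_iff (pow_pos (sub_pos.2 hβγ) 2).ne']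
  linear_combination -hcov

/-- **Covariance identity for the invariant measure, `β ∈ (0,1)`** (equation (3.11)):
`diag(p₀) − p₀ p₀ᵀ = [((γ−β)² + (1−γ²))/(γ−β)²] Σ²_π`, where `Σ²_π` is the covariance
matrix of the invariant probability measure `π` of the predictive-mean kernel. -/
theorem rp_urn_invariant_covariance
    (k : ℕ) (hk : 2 ≤ k)
    (α β : ℝ) (hα : 0 < α) (hβ0 : 0 < β) (hβ1 : β < 1)
    (b₀ : Fin k → ℝ) (hb₀nn : ∀ i, 0 ≤ b₀ i) (hb₀pos : 0 < ∑ i, b₀ i)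
    (r rs : ℝ) (hr : r = α / (1 - β)) (hrs : rs = (∑ i, b₀ i) + r)
    (p₀ : Fin k → ℝ) (hp₀ : ∀ i, p₀ i = b₀ i / ∑ j, b₀ j)
    (γ : ℝ) (hγ : γ = β + α / rs)
    (S : Set (Fin k → ℝ))
    (hS : S = {x | (∀ i, b₀ i / rs ≤ x i ∧ x i ≤ (b₀ i + r) / rs) ∧ ∑ i, x i = 1})
    (Pop : ((Fin k → ℝ) → ℝ) → ((Fin k → ℝ) → ℝ))
    (hPop : ∀ f x, Pop f x
        = ∑ i, x i * f (fun j => β * x j + (1 - γ) * p₀ j + if j = i then γ - β else 0))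
    (π : Measure (Fin k → ℝ)) (hπprob : IsProbabilityMeasure π) (hπS : π Sᶜ = 0)
    (hπinv : ∀ f : (Fin k → ℝ) → ℝ, Measurable f → (∃ C, ∀ x, |f x| ≤ C) →
      ∫ x, Pop f x ∂π = ∫ x, f x ∂π)
    (hπuniq : ∀ π' : Measure (Fin k → ℝ), IsProbabilityMeasure π' → π' Sᶜ = 0 →
      (∀ f : (Fin k → ℝ) → ℝ, Measurable f → (∃ C, ∀ x, |f x| ≤ C) →
        ∫ x, Pop f x ∂π' = ∫ x, f x ∂π') →
      π' = π) :
    ∀ i j : Fin k,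
      (if i = j then p₀ i else 0) - p₀ i * p₀ j
        = ((γ - β) ^ 2 + (1 - γ ^ 2)) / (γ - β) ^ 2
            * ∫ x, (x i - p₀ i) * (x j - p₀ j) ∂π :=
  rp_urn_invariant_covariance_general k α β hα hβ0 hβ1 b₀ hb₀nn hb₀pos r rs hr hrs p₀ hp₀ γ hγ S hS
    Pop hPop π hπprob hπS hπinv
end

section
/- For the Rescaled Pólya urn with β ∈ (0,1) and b₀ = 0 (so B₀ᵢ > 0 for all i), the predictive mean process (ψ_n) is a bounded martingale, hence converges almost surely (and in mean) to a random vector ψ_∞; moreover ψ_∞ takes values in the set of canonical basis vectors {e₁,…,e_k}, almost surely ξ_n = ψ_∞ eventually, and P(ψ_∞ = eᵢ) = B₀ᵢ/|B₀| for each i = 1,…,k. -/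
/-!
Every draw adds the same mass `α`, so the total mass `|B_n| = s_n` is deterministic, with
`s_{n+1} = β s_n + α → α / (1 - β)`. Hence `ψ_{n+1} - ψ_n = (α / s_{n+1}) (ξ_{n+1} - ψ_n)` with a
deterministic step, and `E[ξ_{n+1} | ℱ_n] = ψ_n` makes `(ψ_n)` a martingale in the simplex, which
converges a.s. and in `L¹`. Because the step `α / s_{n+1}` tends to `1 - β > 0` instead of `0`, the
draws `ξ_{n+1} = ψ_n + (s_{n+1} / α) (ψ_{n+1} - ψ_n)` converge to the same limit, and a convergent
sequence of basis vectors is eventually constant. Finally `P(ψ_∞ = eᵢ) = E[ψ_∞ i]`, and the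
martingale keeps the mean `E[ψ_n] = ψ_0 = B₀ / |B₀|`.
-/

open MeasureTheory ProbabilityTheory Filter Topology

theorem Filter.Tendsto.eventually_eq_of_finite {α X : Type*} [TopologicalSpace X] [T1Space X]
    {f : Filter α} {x : α → X} {l : X} {S : Set X} (hS : S.Finite)
    (hx : Tendsto x f (𝓝 l)) (hxS : ∀ᶠ a in f, x a ∈ S) : ∀ᶠ a in f, x a = l := by
  have hfar : ∀ᶠ a in f, x a ∉ S \ {l} :=
    hx.eventually ((hS.sdiff (t := {l})).isClosed.isOpen_compl.mem_nhds fun h => h.2 rfl)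
  filter_upwards [hxS, hfar] with a ha ha'
  by_contra hne
  exact ha' ⟨ha, hne⟩

namespace MeasureTheory

variable {Ω E : Type*} {mΩ : MeasurableSpace Ω} {μ : Measure Ω} [NormedAddCommGroup E]

theorem tendsto_integral_norm_sub_of_norm_le [IsFiniteMeasure μ] {f : ℕ → Ω → E} {g : Ω → E}
    {C : ℝ} (hf : ∀ n, AEStronglyMeasurable (f n) μ) (hg : AEStronglyMeasurable g μ)
    (hC : ∀ n, ∀ᵐ ω ∂μ, ‖f n ω‖ ≤ C)
    (hlim : ∀ᵐ ω ∂μ, Tendsto (fun n => f n ω) atTop (𝓝 (g ω))) :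
    Tendsto (fun n => ∫ ω, ‖f n ω - g ω‖ ∂μ) atTop (𝓝 0) := by
  have hgC : ∀ᵐ ω ∂μ, ‖g ω‖ ≤ C := by
    filter_upwards [ae_all_iff.mpr hC, hlim] with ω hω hω'
    exact le_of_tendsto' hω'.norm hω
  have hdom : ∀ n, ∀ᵐ ω ∂μ, ‖‖f n ω - g ω‖‖ ≤ C + C := fun n => by
    filter_upwards [hC n, hgC] with ω h₁ h₂
    rw [norm_norm]
    exact (norm_sub_le _ _).trans (add_le_add h₁ h₂)
  have hlim' : ∀ᵐ ω ∂μ, Tendsto (fun n => ‖f n ω - g ω‖) atTop (𝓝 0) := by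
    filter_upwards [hlim] with ω hω
    simpa using (hω.sub_const (g ω)).norm
  simpa using tendsto_integral_of_dominated_convergence (fun _ => C + C)
    (fun n => ((hf n).sub hg).norm) (integrable_const _) hdom hlim'

variable [NormedSpace ℝ E] [CompleteSpace E]

theorem condExp_pi_ae_eq_of_forall_apply {ι : Type*} [Fintype ι] {m : MeasurableSpace Ω}
    {f g : Ω → ι → ℝ} (hf : Integrable f μ)
    (h : ∀ i, μ[fun ω => f ω i | m] =ᵐ[μ] fun ω => g ω i) : μ[f | m] =ᵐ[μ] g := by
  have hproj : ∀ i, (fun ω => μ[f | m] ω i) =ᵐ[μ] fun ω => g ω i := fun i =>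
    ((ContinuousLinearMap.proj i).comp_condExp_comm hf).trans (h i)
  filter_upwards [ae_all_iff.mpr hproj] with ω hω using funext hω

theorem Martingale.comp_continuousLinearMap {F ι : Type*} [NormedAddCommGroup F]
    [NormedSpace ℝ F] [CompleteSpace F] [Preorder ι] {ℱ : Filtration ι mΩ} {f : ι → Ω → E}
    (hf : Martingale f ℱ μ) (T : E →L[ℝ] F) : Martingale (fun n => T ∘ f n) ℱ μ :=
  ⟨fun n => T.continuous.comp_stronglyMeasurable (hf.stronglyMeasurable n),
    fun _ j hij => (T.comp_condExp_comm (hf.integrable j)).symm.trans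
      ((hf.condExp_ae_eq hij).fun_comp T)⟩

theorem martingale_nat_of_sub_eq_smul_sub [IsFiniteMeasure μ] {ℱ : Filtration ℕ mΩ}
    {X Y : ℕ → Ω → E} {c : ℕ → ℝ} (hX : StronglyAdapted ℱ X)
    (hXint : ∀ n, Integrable (X n) μ) (hYint : ∀ n, Integrable (Y (n + 1)) μ)
    (hrec : ∀ n, X (n + 1) - X n = c n • (Y (n + 1) - X n))
    (hY : ∀ n, μ[Y (n + 1) | ℱ n] =ᵐ[μ] X n) : Martingale X ℱ μ := by
  refine martingale_nat hX hXint fun n => ?_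
  have hXsucc : X (n + 1) = (1 - c n) • X n + c n • Y (n + 1) := by
    rw [← sub_add_cancel (X (n + 1)) (X n), hrec, sub_smul, one_smul, smul_sub]
    abel
  have hXn : μ[X n | ℱ n] = X n := condExp_of_stronglyMeasurable (ℱ.le n) (hX n) (hXint n)
  filter_upwards [condExp_add ((hXint n).smul (1 - c n)) ((hYint n).smul (c n)) (ℱ n),
    condExp_smul (1 - c n) (X n) (ℱ n), condExp_smul (c n) (Y (n + 1)) (ℱ n), hY n]
    with ω h₁ h₂ h₃ h₄
  rw [hXsucc, h₁, Pi.add_apply, h₂, h₃, hXn, Pi.smul_apply, Pi.smul_apply, h₄, ← add_smul,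
    sub_add_cancel, one_smul]

theorem Martingale.ae_exists_tendsto_of_norm_le {ι : Type*} [Fintype ι] [IsFiniteMeasure μ]
    {ℱ : Filtration ℕ mΩ} {f : ℕ → Ω → ι → ℝ} (hf : Martingale f ℱ μ) {C : ℝ}
    (hC : ∀ n ω, ‖f n ω‖ ≤ C) : ∀ᵐ ω ∂μ, ∃ l, Tendsto (fun n => f n ω) atTop (𝓝 l) := by
  have hbdd : ∀ i n, eLpNorm (fun ω => f n ω i) 1 μ ≤ (μ Set.univ * ENNReal.ofReal C).toNNReal := by
    intro i n
    rw [ENNReal.coe_toNNReal (by finiteness)]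
    have hfi : ∀ ω, ‖f n ω i‖ ≤ C := fun ω => (norm_le_pi_norm (f n ω) i).trans (hC n ω)
    simpa using eLpNorm_le_of_ae_bound (μ := μ) (p := 1) (ae_of_all _ hfi)
  have hcomp : ∀ i, ∀ᵐ ω ∂μ, ∃ c, Tendsto (fun n => f n ω i) atTop (𝓝 c) := fun i =>
    (hf.comp_continuousLinearMap (ContinuousLinearMap.proj i)).submartingale
      |>.exists_ae_tendsto_of_bdd (hbdd i)
  filter_upwards [ae_all_iff.mpr hcomp] with ω hω
  choose l hl using hω
  exact ⟨l, tendsto_pi_nhds.mpr hl⟩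

theorem Martingale.integral_eq_of_tendsto [IsFiniteMeasure μ] {ℱ : Filtration ℕ mΩ}
    {f : ℕ → Ω → E} {g : Ω → E} (hf : Martingale f ℱ μ) {C : ℝ} (hC : ∀ n ω, ‖f n ω‖ ≤ C)
    (hlim : ∀ᵐ ω ∂μ, Tendsto (fun n => f n ω) atTop (𝓝 (g ω))) :
    ∫ ω, g ω ∂μ = ∫ ω, f 0 ω ∂μ := by
  have hconst : ∀ n, ∫ ω, f n ω ∂μ = ∫ ω, f 0 ω ∂μ := fun n =>
    (integral_condExp (ℱ.le 0)).symm.trans (integral_congr_ae (hf.condExp_ae_eq n.zero_le))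
  have hconv := tendsto_integral_of_dominated_convergence (fun _ => C)
    (fun n => ((hf.stronglyMeasurable n).mono (ℱ.le n)).aestronglyMeasurable)
    (integrable_const C) (fun n => ae_of_all _ (hC n)) hlim
  simp only [hconst] at hconv
  exact tendsto_nhds_unique hconv tendsto_const_nhds

theorem integral_apply_eq_measureReal_of_ae_eq_single {ι : Type*} [Countable ι] [DecidableEq ι]
    {g : Ω → ι → ℝ} (hg : Measurable g) (hbasis : ∀ᵐ ω ∂μ, ∃ j, g ω = Pi.single j 1) (i : ι) :
    ∫ ω, g ω i ∂μ = μ.real {ω | g ω = Pi.single i 1} := by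
  have hmeas : MeasurableSet {ω | g ω = Pi.single i 1} := hg (measurableSet_singleton _)
  rw [← integral_indicator_one hmeas]
  refine integral_congr_ae ?_
  filter_upwards [hbasis] with ω ⟨j, hj⟩
  by_cases hji : j = i
  · simp [hj, hji]
  · have hne : ω ∉ {ω | g ω = Pi.single i 1} := fun h => by
      simpa [hji] using congrFun (hj.symm.trans h) j
    simp [Set.indicator_of_notMem hne, hj, hji]

end MeasureTheory

theorem tendsto_of_sub_eq_smul_sub {E : Type*} [NormedAddCommGroup E] [NormedSpace ℝ E]
    {x y : ℕ → E} {c : ℕ → ℝ} {l : E} {d : ℝ} (hx : Tendsto x atTop (𝓝 l))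
    (hc : Tendsto (fun n => (c n)⁻¹) atTop (𝓝 d)) (hc0 : ∀ n, c n ≠ 0)
    (hxy : ∀ n, x (n + 1) - x n = c n • (y (n + 1) - x n)) : Tendsto y atTop (𝓝 l) := by
  have hy : ∀ n, y (n + 1) = x n + (c n)⁻¹ • (x (n + 1) - x n) := fun n => by
    rw [hxy, smul_smul, inv_mul_cancel₀ (hc0 n), one_smul, add_sub_cancel]
  have hlim := hx.add (hc.smul ((hx.comp (tendsto_add_atTop_nat 1)).sub hx))
  rw [sub_self, smul_zero, add_zero] at hlim
  exact (tendsto_add_atTop_iff_nat 1).mp (by simpa only [hy, Function.comp_def] using hlim)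

theorem norm_le_one_of_mem_stdSimplex {ι : Type*} [Fintype ι] {x : ι → ℝ}
    (hx : x ∈ stdSimplex ℝ ι) : ‖x‖ ≤ 1 := by
  simpa using stdSimplex_subset_closedBall hx

theorem smul_mem_stdSimplex_of_nonneg {ι : Type*} [Fintype ι] {v : ι → ℝ} (hv : ∀ i, 0 ≤ v i)
    (hsum : ∑ i, v i ≠ 0) : (∑ i, v i)⁻¹ • v ∈ stdSimplex ℝ ι :=
  ⟨fun i => smul_nonneg (inv_nonneg.mpr (Finset.sum_nonneg fun j _ => hv j)) (hv i), by
    simp [← Finset.mul_sum, inv_mul_cancel₀ hsum]⟩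

def urnMass (α β S₀ : ℝ) : ℕ → ℝ
  | 0 => S₀
  | n + 1 => β * urnMass α β S₀ n + α

section urnMass

variable {α β S₀ : ℝ}

theorem urnMass_pos (hα : 0 < α) (hβ : 0 ≤ β) (hS₀ : 0 < S₀) (n : ℕ) : 0 < urnMass α β S₀ n := by
  induction n with
  | zero => exact hS₀
  | succ n ih => exact add_pos_of_nonneg_of_pos (mul_nonneg hβ ih.le) hα

theorem urnMass_eq (hβ : β ≠ 1) (n : ℕ) :
    urnMass α β S₀ n = α / (1 - β) + β ^ n * (S₀ - α / (1 - β)) := by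
  have h1β : 1 - β ≠ 0 := sub_ne_zero.mpr hβ.symm
  induction n with
  | zero => simp [urnMass]
  | succ n ih =>
    rw [urnMass, ih]
    field_simp
    ring

theorem tendsto_urnMass (hβ : |β| < 1) :
    Tendsto (urnMass α β S₀) atTop (𝓝 (α / (1 - β))) := by
  have hβ1 : β ≠ 1 := fun h => by simp [h] at hβ
  simpa [funext (urnMass_eq (α := α) (S₀ := S₀) hβ1)] using
    tendsto_const_nhds.add ((tendsto_pow_atTop_nhds_zero_of_abs_lt_one hβ).mul_const _)

end urnMass

section RescaledPolyaUrn

variable {Ω ι : Type*} {mΩ : MeasurableSpace Ω} {α β : ℝ} {B₀ : ι → ℝ} {ξ B ψ : ℕ → Ω → ι → ℝ}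

theorem urn_stronglyAdapted {ℱ : Filtration ℕ mΩ} (hB0 : ∀ ω, B 0 ω = B₀)
    (hBrec : ∀ n ω, B (n + 1) ω = β • B n ω + α • ξ (n + 1) ω)
    (hξ : ∀ n, StronglyMeasurable[ℱ (n + 1)] (ξ (n + 1))) : StronglyAdapted ℱ B := by
  intro n
  induction n with
  | zero => rw [funext hB0]; exact stronglyMeasurable_const
  | succ n ih =>
    rw [funext (hBrec n)]
    exact ((ih.mono (ℱ.mono n.le_succ)).const_smul β).add ((hξ n).const_smul α)

theorem urn_psi_succ_sub {S₀ : ℝ}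
    (hBrec : ∀ n ω, B (n + 1) ω = β • B n ω + α • ξ (n + 1) ω)
    (hψ : ∀ n ω, ψ n ω = (urnMass α β S₀ n)⁻¹ • B n ω) (hs : ∀ n, urnMass α β S₀ n ≠ 0)
    (n : ℕ) (ω : Ω) :
    ψ (n + 1) ω - ψ n ω = (α / urnMass α β S₀ (n + 1)) • (ξ (n + 1) ω - ψ n ω) := by
  have hB : B n ω = urnMass α β S₀ n • ψ n ω := by rw [hψ, smul_inv_smul₀ (hs n)]
  have hs' := hs (n + 1)
  rw [hψ (n + 1), hBrec, hB]
  ext i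
  simp only [urnMass] at hs' ⊢
  simp only [Pi.sub_apply, Pi.smul_apply, Pi.add_apply, smul_eq_mul]
  field_simp
  ring

variable [Fintype ι]

theorem urn_sum_eq_urnMass (hB0 : ∀ ω, B 0 ω = B₀)
    (hBrec : ∀ n ω, B (n + 1) ω = β • B n ω + α • ξ (n + 1) ω)
    (hξ : ∀ n ω, ξ (n + 1) ω ∈ stdSimplex ℝ ι) (n : ℕ) (ω : Ω) :
    ∑ i, B n ω i = urnMass α β (∑ i, B₀ i) n := by
  induction n with
  | zero => rw [hB0]; rfl
  | succ n ih =>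
    simp only [hBrec, Pi.add_apply, Pi.smul_apply, smul_eq_mul, Finset.sum_add_distrib,
      ← Finset.mul_sum, ih, (hξ n ω).2, mul_one]
    rfl

theorem urn_nonneg (hα : 0 ≤ α) (hβ : 0 ≤ β) (hB₀ : ∀ i, 0 ≤ B₀ i) (hB0 : ∀ ω, B 0 ω = B₀)
    (hBrec : ∀ n ω, B (n + 1) ω = β • B n ω + α • ξ (n + 1) ω)
    (hξ : ∀ n ω, ξ (n + 1) ω ∈ stdSimplex ℝ ι) (n : ℕ) (ω : Ω) (i : ι) : 0 ≤ B n ω i := by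
  induction n with
  | zero => rw [hB0]; exact hB₀ i
  | succ n ih => rw [hBrec]; exact add_nonneg (mul_nonneg hβ ih) (mul_nonneg hα ((hξ n ω).1 i))

theorem urn_psi_eq_smul (hB0 : ∀ ω, B 0 ω = B₀)
    (hBrec : ∀ n ω, B (n + 1) ω = β • B n ω + α • ξ (n + 1) ω)
    (hξ : ∀ n ω, ξ (n + 1) ω ∈ stdSimplex ℝ ι) (hψ : ∀ n ω i, ψ n ω i = B n ω i / ∑ j, B n ω j)
    (n : ℕ) (ω : Ω) : ψ n ω = (urnMass α β (∑ i, B₀ i) n)⁻¹ • B n ω := by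
  ext i
  rw [hψ, urn_sum_eq_urnMass hB0 hBrec hξ, Pi.smul_apply, smul_eq_mul, div_eq_inv_mul]

theorem urn_psi_mem_stdSimplex (hα : 0 < α) (hβ : 0 ≤ β) (hB₀ : ∀ i, 0 ≤ B₀ i)
    (hS₀ : 0 < ∑ i, B₀ i) (hB0 : ∀ ω, B 0 ω = B₀)
    (hBrec : ∀ n ω, B (n + 1) ω = β • B n ω + α • ξ (n + 1) ω)
    (hξ : ∀ n ω, ξ (n + 1) ω ∈ stdSimplex ℝ ι) (hψ : ∀ n ω i, ψ n ω i = B n ω i / ∑ j, B n ω j)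
    (n : ℕ) (ω : Ω) : ψ n ω ∈ stdSimplex ℝ ι := by
  have hmass := urn_sum_eq_urnMass hB0 hBrec hξ n ω
  rw [urn_psi_eq_smul hB0 hBrec hξ hψ, ← hmass]
  exact smul_mem_stdSimplex_of_nonneg (urn_nonneg hα.le hβ hB₀ hB0 hBrec hξ n ω)
    (hmass ▸ (urnMass_pos hα hβ hS₀ n).ne')

theorem urn_martingale {μ : Measure Ω} [IsFiniteMeasure μ] {ℱ : Filtration ℕ mΩ} (hα : 0 < α)
    (hβ : 0 ≤ β) (hB₀ : ∀ i, 0 ≤ B₀ i) (hS₀ : 0 < ∑ i, B₀ i) (hB0 : ∀ ω, B 0 ω = B₀)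
    (hBrec : ∀ n ω, B (n + 1) ω = β • B n ω + α • ξ (n + 1) ω)
    (hξ : ∀ n ω, ξ (n + 1) ω ∈ stdSimplex ℝ ι) (hξm : ∀ n, Measurable[ℱ (n + 1)] (ξ (n + 1)))
    (hψ : ∀ n ω i, ψ n ω i = B n ω i / ∑ j, B n ω j)
    (hcond : ∀ n i, μ[fun ω => ξ (n + 1) ω i | ℱ n] =ᵐ[μ] fun ω => ψ n ω i) :
    Martingale ψ ℱ μ := by
  have hψs := urn_psi_eq_smul hB0 hBrec hξ hψ
  have hBadapt := urn_stronglyAdapted hB0 hBrec fun n => (hξm n).stronglyMeasurable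
  have hψadapt : StronglyAdapted ℱ ψ := fun n => by
    rw [funext (hψs n)]
    exact (hBadapt n).const_smul (urnMass α β (∑ i, B₀ i) n)⁻¹
  have hψint : ∀ n, Integrable (ψ n) μ := fun n =>
    .of_bound ((hψadapt n).mono (ℱ.le n)).aestronglyMeasurable 1 (ae_of_all _ fun ω =>
      norm_le_one_of_mem_stdSimplex (urn_psi_mem_stdSimplex hα hβ hB₀ hS₀ hB0 hBrec hξ hψ n ω))
  have hξint : ∀ n, Integrable (ξ (n + 1)) μ := fun n =>
    .of_bound ((hξm n).mono (ℱ.le _) le_rfl).aestronglyMeasurable 1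
      (ae_of_all _ fun ω => norm_le_one_of_mem_stdSimplex (hξ n ω))
  exact martingale_nat_of_sub_eq_smul_sub hψadapt hψint hξint
    (fun n => funext (urn_psi_succ_sub hBrec hψs (fun m => (urnMass_pos hα hβ hS₀ m).ne') n))
    fun n => condExp_pi_ae_eq_of_forall_apply (hξint n) (hcond n)

theorem urn_eventually_eq_of_tendsto [DecidableEq ι] (hα : 0 < α) (hβ0 : 0 ≤ β) (hβ1 : β < 1)
    (hS₀ : 0 < ∑ i, B₀ i) (hB0 : ∀ ω, B 0 ω = B₀)
    (hBrec : ∀ n ω, B (n + 1) ω = β • B n ω + α • ξ (n + 1) ω)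
    (hξ : ∀ n ω, ∃ i, ξ (n + 1) ω = Pi.single i 1)
    (hψ : ∀ n ω i, ψ n ω i = B n ω i / ∑ j, B n ω j) {ω : Ω} {l : ι → ℝ}
    (hlim : Tendsto (fun n => ψ n ω) atTop (𝓝 l)) : ∀ᶠ n in atTop, ξ n ω = l := by
  have hξS : ∀ n ω, ξ (n + 1) ω ∈ stdSimplex ℝ ι := fun n ω =>
    (hξ n ω).elim fun i hi => hi ▸ single_mem_stdSimplex ℝ i
  have hs := urnMass_pos hα hβ0 hS₀
  have hc : Tendsto (fun n => (α / urnMass α β (∑ i, B₀ i) (n + 1))⁻¹) atTop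
      (𝓝 (α / (1 - β) / α)) := by
    simpa only [inv_div, Function.comp_def] using ((tendsto_urnMass (abs_lt.mpr
      ⟨by linarith, hβ1⟩)).comp (tendsto_add_atTop_nat 1)).div_const α
  have hΔ n := urn_psi_succ_sub hBrec (urn_psi_eq_smul hB0 hBrec hξS hψ) (fun n => (hs n).ne') n ω
  refine (tendsto_of_sub_eq_smul_sub hlim hc (fun n => div_ne_zero hα.ne' (hs _).ne') hΔ
    ).eventually_eq_of_finite (Set.finite_range fun i => Pi.single i 1) ?_
  filter_upwards [eventually_ge_atTop 1] with n hn
  obtain ⟨i, hi⟩ := hξ (n - 1) ω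
  exact ⟨i, (Nat.sub_add_cancel hn ▸ hi).symm⟩

end RescaledPolyaUrn

/-- **Rescaled Pólya urn, `β ∈ (0,1)`, `b₀ = 0`** (Remark 3.4): the predictive mean `(ψ_n)`
is a bounded martingale; it converges a.s. and in mean to a random vector `ψ_∞` with values
in the canonical basis, eventually `ξ_n = ψ_∞`, and `P(ψ_∞ = eᵢ) = B₀ᵢ/|B₀|`. -/
theorem rp_urn_beta_lt_one_b_zero_martingale
    {Ω : Type*} {mΩ : MeasurableSpace Ω} {μ : Measure Ω} [IsProbabilityMeasure μ]
    (k : ℕ) (hk : 2 ≤ k)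
    (α β : ℝ) (hα : 0 < α) (hβ0 : 0 < β) (hβ1 : β < 1)
    (b₀ B₀ : Fin k → ℝ) (hb₀ : b₀ = 0) (hB₀pos : ∀ i, 0 < B₀ i)
    (ξ B : ℕ → Ω → Fin k → ℝ) (ℱ : Filtration ℕ mΩ)
    (hξval : ∀ n, 1 ≤ n → ∀ ω, ∃ i, ξ n ω = Pi.single i 1)
    (hadapt : ∀ n, 1 ≤ n → Measurable[ℱ n] (ξ n))
    (hB0 : ∀ ω, B 0 ω = B₀)
    (hBrec : ∀ n ω, B (n + 1) ω = β • B n ω + α • ξ (n + 1) ω)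
    (ψ : ℕ → Ω → Fin k → ℝ)
    (hψ : ∀ n ω i, ψ n ω i = (b₀ i + B n ω i) / ∑ j, (b₀ j + B n ω j))
    (hcond : ∀ n i, μ[fun ω => ξ (n + 1) ω i | ℱ n] =ᵐ[μ] fun ω => ψ n ω i) :
    Martingale ψ ℱ μ ∧
    ∃ ψinf : Ω → Fin k → ℝ, Measurable ψinf ∧
      (∀ᵐ ω ∂μ, Tendsto (fun n => ψ n ω) atTop (nhds (ψinf ω))) ∧
      Tendsto (fun n => ∫ ω, ‖ψ n ω - ψinf ω‖ ∂μ) atTop (nhds 0) ∧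
      (∀ᵐ ω ∂μ, ∃ i, ψinf ω = Pi.single i 1) ∧
      (∀ᵐ ω ∂μ, ∃ N, ∀ n, N ≤ n → ξ n ω = ψinf ω) ∧
      (∀ i, μ {ω | ψinf ω = Pi.single i 1} = ENNReal.ofReal (B₀ i / ∑ j, B₀ j)) := by
  subst hb₀
  simp only [Pi.zero_apply, zero_add] at hψ
  have hS₀ : 0 < ∑ j, B₀ j :=
    Finset.sum_pos (fun i _ => hB₀pos i) ⟨⟨0, by omega⟩, Finset.mem_univ _⟩
  have hξ : ∀ n ω, ∃ i, ξ (n + 1) ω = Pi.single i 1 := fun n => hξval (n + 1) n.succ_pos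
  have hξS : ∀ n ω, ξ (n + 1) ω ∈ stdSimplex ℝ (Fin k) := fun n ω =>
    (hξ n ω).elim fun i hi => hi ▸ single_mem_stdSimplex ℝ i
  have hψbdd : ∀ n ω, ‖ψ n ω‖ ≤ 1 := fun n ω => norm_le_one_of_mem_stdSimplex
    (urn_psi_mem_stdSimplex hα hβ0.le (fun i => (hB₀pos i).le) hS₀ hB0 hBrec hξS hψ n ω)
  have hmart : Martingale ψ ℱ μ := urn_martingale hα hβ0.le (fun i => (hB₀pos i).le) hS₀ hB0
    hBrec hξS (fun n => hadapt (n + 1) n.succ_pos) hψ hcond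
  obtain ⟨ψinf, hψinf, hlim⟩ := measurable_limit_of_tendsto_metrizable_ae
    (fun n => (hmart.stronglyMeasurable n).measurable.mono (ℱ.le n) le_rfl |>.aemeasurable)
    (hmart.ae_exists_tendsto_of_norm_le hψbdd)
  have hξlim : ∀ᵐ ω ∂μ, ∀ᶠ n in atTop, ξ n ω = ψinf ω := hlim.mono fun ω hω =>
    urn_eventually_eq_of_tendsto hα hβ0.le hβ1 hS₀ hB0 hBrec hξ hψ hω
  have hbasis : ∀ᵐ ω ∂μ, ∃ i, ψinf ω = Pi.single i 1 := hξlim.mono fun ω hω => by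
    obtain ⟨n, hn⟩ := (hω.and (eventually_ge_atTop 1)).exists
    obtain ⟨i, hi⟩ := hξval n hn.2 ω
    exact ⟨i, hn.1.symm.trans hi⟩
  refine ⟨hmart, ψinf, hψinf, hlim, ?_, hbasis, ?_, fun i => ?_⟩
  · exact tendsto_integral_norm_sub_of_norm_le
      (fun n => (hmart.stronglyMeasurable n).mono (ℱ.le n) |>.aestronglyMeasurable)
      hψinf.aestronglyMeasurable (fun n => ae_of_all _ (hψbdd n)) hlim
  · exact hξlim.mono fun ω hω => eventually_atTop.mp hω
  · have hmean : ∫ ω, ψinf ω i ∂μ = ∫ ω, ψ 0 ω i ∂μ :=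
      (hmart.comp_continuousLinearMap (ContinuousLinearMap.proj i)).integral_eq_of_tendsto
        (fun n ω => (norm_le_pi_norm _ i).trans (hψbdd n ω))
        (hlim.mono fun ω hω => tendsto_pi_nhds.mp hω i)
    rw [← ofReal_measureReal, ← integral_apply_eq_measureReal_of_ae_eq_single hψinf hbasis, hmean]
    simp [hψ, hB0]
end
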